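/- arXiv:2506.21239 — 7 statements merged into one kernel-verified Lean document; each statement's English description precedes it below -/
import Mathlib

section
/- Let L ∈ ℝ^{n×n} satisfy L i j ≤ 0 for all i ≠ j and L i i ≥ ∑_{j ≠ i} |L i j| for every i (in particular L i i ≥ 0), and let K = diag(κ₁, …, κ_n) with κ_i > 0 for all i. Then the matrix A = −L − K is Hurwitz: every complex eigenvalue μ of A satisfies Re μ < 0. (This is Lemma 1 of the paper: the district heating network system matrix A = −A_L − diag(κ_v), where A_L is a weighted flow Laplacian of the network graph and κ_v > 0 are heat-loss coefficients, is Hurwitz.) -/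
/-!
By Gershgorin's theorem every eigenvalue of `-L - K` lies in a disc centred at `-(L k k + κ k)`
of radius `∑ j ≠ k, |L k j| ≤ L k k`; since `κ k > 0` each such disc lies in the open left
half-plane. Concretely, for `0 ≤ Re μ` the matrix `μ • 1 + L + K` is strictly diagonally dominant,
hence invertible.
-/

open Matrix

namespace Matrix

variable {n : Type*} [Fintype n] [DecidableEq n]

theorem det_smul_one_sub_ne_zero_of_re_nonneg {A : Matrix n n ℂ}
    (hA : ∀ k, (A k k).re + ∑ j ∈ Finset.univ.erase k, ‖A k j‖ < 0)
    {μ : ℂ} (hμ : 0 ≤ μ.re) : (μ • (1 : Matrix n n ℂ) - A).det ≠ 0 := by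
  refine det_ne_zero_of_sum_row_lt_diag fun k => ?_
  have hrow : ∑ j ∈ Finset.univ.erase k, ‖(μ • (1 : Matrix n n ℂ) - A) k j‖ =
      ∑ j ∈ Finset.univ.erase k, ‖A k j‖ :=
    Finset.sum_congr rfl fun j hj => by
      simp [one_apply_ne' (Finset.ne_of_mem_erase hj)]
  calc ∑ j ∈ Finset.univ.erase k, ‖(μ • (1 : Matrix n n ℂ) - A) k j‖
      < μ.re - (A k k).re := by linarith [hA k]
    _ = (μ - A k k).re := (Complex.sub_re _ _).symm
    _ ≤ ‖μ - A k k‖ := Complex.re_le_norm _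
    _ = ‖(μ • (1 : Matrix n n ℂ) - A) k k‖ := by simp

theorem re_neg_of_det_smul_one_sub_eq_zero {A : Matrix n n ℂ}
    (hA : ∀ k, (A k k).re + ∑ j ∈ Finset.univ.erase k, ‖A k j‖ < 0)
    {μ : ℂ} (hμ : (μ • (1 : Matrix n n ℂ) - A).det = 0) : μ.re < 0 := by
  by_contra! h
  exact det_smul_one_sub_ne_zero_of_re_nonneg hA h hμ

end Matrix

theorem laplacian_minus_damping_is_hurwitz_general
    {n : ℕ} (L : Matrix (Fin n) (Fin n) ℝ) (κ : Fin n → ℝ)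
    (hdom : ∀ i, ∑ j ∈ Finset.univ.erase i, |L i j| ≤ L i i)
    (hκ : ∀ i, 0 < κ i) :
    ∀ μ : ℂ,
      (μ • (1 : Matrix (Fin n) (Fin n) ℂ) -
        (-L - Matrix.diagonal κ).map (Complex.ofReal ·)).det = 0 →
      μ.re < 0 := by
  intro μ hμ
  refine re_neg_of_det_smul_one_sub_eq_zero (fun k => ?_) hμ
  have hrow : ∑ j ∈ Finset.univ.erase k, ‖((-L - diagonal κ).map (Complex.ofReal ·)) k j‖ =
      ∑ j ∈ Finset.univ.erase k, |L k j| :=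
    Finset.sum_congr rfl fun j hj => by
      simp [diagonal_apply_ne _ (Finset.ne_of_mem_erase hj).symm]
  rw [hrow]
  simp only [map_apply, Matrix.sub_apply, Matrix.neg_apply, diagonal_apply_eq, Complex.ofReal_re]
  linarith [hdom k, hκ k]

/-- **Lemma 1 of the paper.** If `L` has nonpositive off-diagonal
entries and each diagonal entry dominates the sum of the absolute values of the
off-diagonal entries in its row (a weighted flow Laplacian), and `K` is a diagonal
matrix with strictly positive diagonal entries, then `A = -L - K` is Hurwitz:
every complex eigenvalue `μ` of `A` (root of `det (μ • I - A) = 0`) satisfies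
`Re μ < 0`. -/
theorem laplacian_minus_damping_is_hurwitz
    {n : ℕ} (L : Matrix (Fin n) (Fin n) ℝ) (κ : Fin n → ℝ)
    (hoff : ∀ i j, i ≠ j → L i j ≤ 0)
    (hdom : ∀ i, ∑ j ∈ Finset.univ.erase i, |L i j| ≤ L i i)
    (hκ : ∀ i, 0 < κ i) :
    ∀ μ : ℂ,
      (μ • (1 : Matrix (Fin n) (Fin n) ℂ) -
        (-L - Matrix.diagonal κ).map (Complex.ofReal ·)).det = 0 →
      μ.re < 0 :=
  laplacian_minus_damping_is_hurwitz_general L κ hdom hκ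
end

section
/- Weierstraß canonical form (Proposition 1, first part): Let D, M ∈ ℂ^{k×k} be such that the pencil sD − M is regular, i.e., there exists s₀ ∈ ℂ with det(s₀ D − M) ≠ 0. Then there exist r ∈ {0, 1, …, k}, invertible matrices P, Q ∈ ℂ^{k×k}, a matrix J ∈ ℂ^{r×r}, and a nilpotent matrix N ∈ ℂ^{(k−r)×(k−r)} such that P D Q equals the block-diagonal matrix with blocks I_r and N, and P M Q equals the block-diagonal matrix with blocks J and I_{k−r}. -/
/-!
Since `E := s₀ D - M` is invertible, put `A := E⁻¹ D`, so that `E⁻¹ M = s₀ A - 1`. Fitting's lemma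
splits `ℂᵏ = range Aⁿ ⊕ ker Aⁿ` (for `n` large) into `A`-invariant subspaces on which `A` acts
invertibly and nilpotently, so `T⁻¹ A T = diag(A₁, A₀)` with `A₁` invertible and `A₀` nilpotent.
As `s₀ A₀` is nilpotent, `S := s₀ A₀ - 1` is invertible, and multiplying on the left by
`diag(A₁⁻¹, S⁻¹)` turns the pair `(diag(A₁, A₀), s₀ diag(A₁, A₀) - 1)` into
`(diag(1, N), diag(s₀ - A₁⁻¹, 1))` with `N = S⁻¹ A₀`, which is nilpotent because `S` commutes
with `A₀`.
-/

open Matrix Module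

namespace Module.End

section Semiring

variable {R M : Type*} [Semiring R] [AddCommMonoid M] [Module R M]

lemma apply_mem_range_pow (f : End R M) (n : ℕ) :
    ∀ x ∈ LinearMap.range (f ^ n), f x ∈ LinearMap.range (f ^ n) := by
  rintro _ ⟨y, rfl⟩
  exact ⟨f y, by rw [← mul_apply, ← mul_apply, pow_mul_comm']⟩

lemma apply_mem_ker_pow (f : End R M) (n : ℕ) :
    ∀ x ∈ LinearMap.ker (f ^ n), f x ∈ LinearMap.ker (f ^ n) := by
  intro x hx
  rw [LinearMap.mem_ker] at hx ⊢
  rw [← mul_apply, pow_mul_comm', mul_apply, hx, map_zero]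

lemma isNilpotent_restrict_ker_pow (f : End R M) (n : ℕ) :
    IsNilpotent (f.restrict (f.apply_mem_ker_pow n)) := by
  refine ⟨n, ?_⟩
  rw [pow_restrict]
  ext x
  exact x.2

end Semiring

variable {K V : Type*} [Field K] [AddCommGroup V] [Module K V] [FiniteDimensional K V]

lemma isUnit_restrict_range_pow (f : End K V) {n : ℕ} (hn : n ≠ 0)
    (h : Disjoint (LinearMap.ker (f ^ n)) (LinearMap.range (f ^ n))) :
    IsUnit (f.restrict (f.apply_mem_range_pow n)) := by
  have hpow : f ^ n = f ^ (n - 1) * f := by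
    rw [← pow_succ, Nat.sub_add_cancel (Nat.pos_of_ne_zero hn)]
  rw [LinearMap.isUnit_iff_ker_eq_bot, eq_bot_iff]
  rintro ⟨x, hx_range⟩ hx
  have hfx : f x = 0 := congrArg Subtype.val (LinearMap.mem_ker.mp hx)
  have hx_ker : x ∈ LinearMap.ker (f ^ n) := by
    rw [LinearMap.mem_ker, hpow, mul_apply, hfx, map_zero]
  simpa using h.le_bot ⟨hx_ker, hx_range⟩

end Module.End

section Complement

variable {R M : Type*} [CommRing R] [AddCommGroup M] [Module R M] {p q : Submodule R M}
  (h : IsCompl p q) {f : End R M} (hp : ∀ x ∈ p, f x ∈ p) (hq : ∀ x ∈ q, f x ∈ q)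
include h hp hq

lemma Submodule.prodEquivOfIsCompl_symm_comp_comp_prodEquivOfIsCompl :
    (Submodule.prodEquivOfIsCompl p q h).symm.toLinearMap ∘ₗ f ∘ₗ
        (Submodule.prodEquivOfIsCompl p q h).toLinearMap =
      (f.restrict hp).prodMap (f.restrict hq) := by
  ext x <;> simp [hp, hq]

lemma LinearMap.toMatrix_map_prodEquivOfIsCompl {ι κ : Type*} [Fintype ι] [Fintype κ]
    [DecidableEq ι] [DecidableEq κ] (bp : Basis ι R p) (bq : Basis κ R q) :
    LinearMap.toMatrix ((bp.prod bq).map (Submodule.prodEquivOfIsCompl p q h))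
        ((bp.prod bq).map (Submodule.prodEquivOfIsCompl p q h)) f =
      fromBlocks (LinearMap.toMatrix bp bp (f.restrict hp)) 0 0
        (LinearMap.toMatrix bq bq (f.restrict hq)) := by
  rw [LinearMap.toMatrix_map_left, LinearMap.toMatrix_map_right,
    Submodule.prodEquivOfIsCompl_symm_comp_comp_prodEquivOfIsCompl h hp hq,
    LinearMap.toMatrix_prodMap]

end Complement

lemma Module.End.exists_basis_toMatrix_eq_fromBlocks {K V : Type*} [Field K] [AddCommGroup V]
    [Module K V] [FiniteDimensional K V] (f : End K V) :
    ∃ (r s : ℕ) (b : Basis (Fin r ⊕ Fin s) K V) (A₁ : Matrix (Fin r) (Fin r) K)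
      (A₀ : Matrix (Fin s) (Fin s) K),
      IsUnit A₁ ∧ IsNilpotent A₀ ∧ LinearMap.toMatrix b b f = fromBlocks A₁ 0 0 A₀ := by
  obtain ⟨n, hcompl, hn⟩ :=
    (f.eventually_isCompl_ker_pow_range_pow.and (Filter.eventually_ne_atTop 0)).exists
  let bp := finBasis K (LinearMap.range (f ^ n))
  let bq := finBasis K (LinearMap.ker (f ^ n))
  refine ⟨_, _, (bp.prod bq).map (Submodule.prodEquivOfIsCompl _ _ hcompl.symm), _, _,
    ?_, ?_, LinearMap.toMatrix_map_prodEquivOfIsCompl hcompl.symm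
      (f.apply_mem_range_pow n) (f.apply_mem_ker_pow n) bp bq⟩
  · exact (LinearMap.isUnit_toMatrix_iff bp).mpr (f.isUnit_restrict_range_pow hn hcompl.disjoint)
  · exact (f.isNilpotent_restrict_ker_pow n).map (LinearMap.toMatrixAlgEquiv bq)

lemma LinearMap.toMatrix_basis_reindex {R M ι κ : Type*} [CommRing R] [AddCommGroup M]
    [Module R M] [Fintype ι] [Fintype κ] [DecidableEq ι] [DecidableEq κ] (b : Basis ι R M)
    (e : ι ≃ κ) (f : End R M) :
    LinearMap.toMatrix (b.reindex e) (b.reindex e) f = reindex e e (LinearMap.toMatrix b b f) := by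
  ext i j
  simp [LinearMap.toMatrix_apply]

namespace Matrix

variable {α : Type*} {r s k : ℕ}

def finBlockDiag [Zero α] (h : r + s = k) (A : Matrix (Fin r) (Fin r) α)
    (B : Matrix (Fin s) (Fin s) α) : Matrix (Fin k) (Fin k) α :=
  reindex (finSumFinEquiv.trans (finCongr h)) (finSumFinEquiv.trans (finCongr h))
    (fromBlocks A 0 0 B)

lemma finBlockDiag_mul_finBlockDiag [NonUnitalNonAssocSemiring α] (h : r + s = k)
    (A A' : Matrix (Fin r) (Fin r) α) (B B' : Matrix (Fin s) (Fin s) α) :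
    finBlockDiag h A B * finBlockDiag h A' B' = finBlockDiag h (A * A') (B * B') := by
  simp only [finBlockDiag, reindex_apply]
  rw [submatrix_mul_equiv, fromBlocks_multiply]
  simp

lemma smul_finBlockDiag_sub_finBlockDiag [Ring α] (h : r + s = k) (c : α)
    (A A' : Matrix (Fin r) (Fin r) α) (B B' : Matrix (Fin s) (Fin s) α) :
    c • finBlockDiag h A B - finBlockDiag h A' B' = finBlockDiag h (c • A - A') (c • B - B') := by
  ext i j
  simp only [finBlockDiag, reindex_apply, sub_apply, smul_apply, submatrix_apply]
  rcases (finSumFinEquiv.trans (finCongr h)).symm i with i | i <;>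
    rcases (finSumFinEquiv.trans (finCongr h)).symm j with j | j <;> simp

lemma det_finBlockDiag [CommRing α] (h : r + s = k) (A : Matrix (Fin r) (Fin r) α)
    (B : Matrix (Fin s) (Fin s) α) : (finBlockDiag h A B).det = A.det * B.det := by
  rw [finBlockDiag, det_reindex_self, det_fromBlocks_zero₂₁]

lemma exists_isUnit_mul_eq_mul_finBlockDiag {K : Type*} [Field K] (A : Matrix (Fin k) (Fin k) K) :
    ∃ (r s : ℕ) (hrs : r + s = k) (T : Matrix (Fin k) (Fin k) K)
      (A₁ : Matrix (Fin r) (Fin r) K) (A₀ : Matrix (Fin s) (Fin s) K),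
      IsUnit T ∧ IsUnit A₁ ∧ IsNilpotent A₀ ∧ A * T = T * finBlockDiag hrs A₁ A₀ := by
  obtain ⟨r, s, b, A₁, A₀, hA₁, hA₀, hb⟩ :=
    Module.End.exists_basis_toMatrix_eq_fromBlocks (toLin' A)
  have hrs : r + s = k := by simpa using (finrank_eq_card_basis b).symm
  let std := Pi.basisFun K (Fin k)
  let b' := b.reindex (finSumFinEquiv.trans (finCongr hrs))
  have hA : LinearMap.toMatrix std std (toLin' A) = A := by
    rw [LinearMap.toMatrix_eq_toMatrix', LinearMap.toMatrix'_toLin']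
  refine ⟨r, s, hrs, std.toMatrix b', A₁, A₀, ?_, hA₁, hA₀, ?_⟩
  · let := std.invertibleToMatrix b'
    exact isUnit_of_invertible _
  · calc A * std.toMatrix b'
        = LinearMap.toMatrix b' std (toLin' A) := by
          rw [← linearMap_toMatrix_mul_basis_toMatrix b' std std, hA]
      _ = std.toMatrix b' * LinearMap.toMatrix b' b' (toLin' A) :=
          (basis_toMatrix_mul_linearMap_toMatrix _ _ _ _).symm
      _ = std.toMatrix b' * finBlockDiag hrs A₁ A₀ := by
          rw [LinearMap.toMatrix_basis_reindex, hb, finBlockDiag]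

lemma isNilpotent_inv_smul_sub_one_mul {R n : Type*} [CommRing R] [Fintype n] [DecidableEq n]
    {A : Matrix n n R} (hA : IsNilpotent A) (c : R) : IsNilpotent ((c • A - 1)⁻¹ * A) := by
  obtain ⟨u, hu⟩ := (hA.smul c).isUnit_sub_one
  have hc : Commute (↑u : Matrix n n R) A :=
    hu ▸ ((Commute.refl A).smul_left c).sub_left (Commute.one_left A)
  rw [← hu, ← coe_units_inv]
  exact hc.units_inv_left.isNilpotent_mul_left hA

end Matrix

/-- **Weierstraß canonical form.** If the pencil `s D - M` is regular,
i.e. `det (s₀ • D - M) ≠ 0` for some `s₀ ∈ ℂ`, then there are `r, s` with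
`r + s = k`, invertible `P, Q`, a matrix `J` of size `r` and a nilpotent `N` of
size `s` such that `P D Q = diag(I_r, N)` and `P M Q = diag(J, I_s)`. -/
theorem weierstrass_canonical_form
    {k : ℕ} (D M : Matrix (Fin k) (Fin k) ℂ)
    (hreg : ∃ s₀ : ℂ, (s₀ • D - M).det ≠ 0) :
    ∃ (r s : ℕ) (hrs : r + s = k)
      (P Q : Matrix (Fin k) (Fin k) ℂ)
      (J : Matrix (Fin r) (Fin r) ℂ) (N : Matrix (Fin s) (Fin s) ℂ),
      IsUnit P ∧ IsUnit Q ∧ IsNilpotent N ∧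
      P * D * Q =
        Matrix.reindex (finSumFinEquiv.trans (finCongr hrs))
          (finSumFinEquiv.trans (finCongr hrs))
          (Matrix.fromBlocks (1 : Matrix (Fin r) (Fin r) ℂ) 0 0 N) ∧
      P * M * Q =
        Matrix.reindex (finSumFinEquiv.trans (finCongr hrs))
          (finSumFinEquiv.trans (finCongr hrs))
          (Matrix.fromBlocks J 0 0 (1 : Matrix (Fin s) (Fin s) ℂ)) := by
  obtain ⟨s₀, hdet⟩ := hreg
  set E := s₀ • D - M
  have hE : IsUnit E.det := isUnit_iff_ne_zero.mpr hdet
  obtain ⟨r, s, hrs, T, A₁, A₀, hT, hA₁, hA₀, hAT⟩ :=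
    exists_isUnit_mul_eq_mul_finBlockDiag (E⁻¹ * D)
  rw [isUnit_iff_isUnit_det] at hT hA₁
  have hS : IsUnit (s₀ • A₀ - 1).det :=
    (isUnit_iff_isUnit_det _).mp (hA₀.smul s₀).isUnit_sub_one
  set W := finBlockDiag hrs A₁⁻¹ (s₀ • A₀ - 1)⁻¹
  have hPD : W * T⁻¹ * E⁻¹ * D * T = finBlockDiag hrs 1 ((s₀ • A₀ - 1)⁻¹ * A₀) :=
    calc W * T⁻¹ * E⁻¹ * D * T = W * T⁻¹ * (E⁻¹ * D * T) := by simp only [mul_assoc]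
      _ = W * finBlockDiag hrs A₁ A₀ := by
          rw [hAT, ← mul_assoc, nonsing_inv_mul_cancel_right _ _ hT]
      _ = _ := by rw [finBlockDiag_mul_finBlockDiag, nonsing_inv_mul _ hA₁]
  have hPM : W * T⁻¹ * E⁻¹ * M * T = finBlockDiag hrs (s₀ • 1 - A₁⁻¹) 1 := by
    have hN : s₀ • ((s₀ • A₀ - 1)⁻¹ * A₀) - (s₀ • A₀ - 1)⁻¹ = 1 :=
      calc _ = (s₀ • A₀ - 1)⁻¹ * (s₀ • A₀ - 1) := by rw [mul_sub, mul_one, Matrix.mul_smul]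
        _ = 1 := nonsing_inv_mul _ hS
    rw [show M = s₀ • D - E from (sub_sub_cancel _ _).symm, mul_sub, sub_mul, Matrix.mul_smul,
      Matrix.smul_mul, hPD, nonsing_inv_mul_cancel_right _ _ hE,
      nonsing_inv_mul_cancel_right _ _ hT, smul_finBlockDiag_sub_finBlockDiag, hN]
  refine ⟨r, s, hrs, W * T⁻¹ * E⁻¹, T, s₀ • 1 - A₁⁻¹, (s₀ • A₀ - 1)⁻¹ * A₀, ?_,
    (isUnit_iff_isUnit_det T).mpr hT, isNilpotent_inv_smul_sub_one_mul hA₀ s₀, hPD, hPM⟩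
  rw [isUnit_iff_isUnit_det, det_mul, det_mul, det_finBlockDiag]
  exact (((isUnit_nonsing_inv_det _ hA₁).mul (isUnit_nonsing_inv_det _ hS)).mul
    (isUnit_nonsing_inv_det _ hT)).mul (isUnit_nonsing_inv_det _ hE)
end

section
/- Explicit solution of the nilpotent differential-algebraic equation (Proposition 1, formula (9)): Let N ∈ ℂ^{d×d} be nilpotent with N^κ = 0, let I ⊆ ℝ be an open interval, let f : I → ℂ^d be κ-times differentiable, and let ξ : I → ℂ^d be κ-times differentiable with N ξ'(t) = ξ(t) + f(t) for all t ∈ I. Then ξ(t) = −∑_{i=0}^{κ−1} N^i f^{(i)}(t) for all t ∈ I, where f^{(i)} denotes the i-th derivative of f. -/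
/-!
Differentiating the equation `N ξ' = ξ + f` repeatedly gives `N ξ^{(j+1)} = ξ^{(j)} + f^{(j)}`
for `j < κ`. Substituting these relations into one another telescopes to
`ξ = N^κ ξ^{(κ)} - ∑_{i<κ} N^i f^{(i)}`, and the first term vanishes because `N^κ = 0`.
-/

open Set Finset

theorem Module.End.eq_pow_apply_sub_sum_of_apply_succ_eq {R M : Type*} [Semiring R]
    [AddCommGroup M] [Module R M] (A : Module.End R M) {g h : ℕ → M} {n : ℕ}
    (hrel : ∀ j < n, A (g (j + 1)) = g j + h j) :
    g 0 = (A ^ n) (g n) - ∑ i ∈ range n, (A ^ i) (h i) := by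
  induction n with
  | zero => simp
  | succ n ih =>
    have hpow : (A ^ n) (g n) = (A ^ (n + 1)) (g (n + 1)) - (A ^ n) (h n) := by
      rw [pow_succ, Module.End.mul_apply, hrel n n.lt_succ_self, map_add, add_sub_cancel_right]
    rw [ih fun j hj => hrel j (hj.trans n.lt_succ_self), hpow, sum_range_succ]
    abel

section Derivatives

variable {𝕜 E : Type*} [NontriviallyNormedField 𝕜] [NormedAddCommGroup E] [NormedSpace 𝕜 E]
  (L : E →L[𝕜] E) {U : Set 𝕜}

theorem ContinuousLinearMap.apply_deriv_eqOn {g h : 𝕜 → E} (hU : IsOpen U)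
    (hg : DifferentiableOn 𝕜 g U) (heq : EqOn (fun t => L (g t)) h U) :
    EqOn (fun t => L (deriv g t)) (deriv h) U := by
  intro t ht
  have hnhds : U ∈ nhds t := hU.mem_nhds ht
  rw [← (heq.eventuallyEq_of_mem hnhds).deriv_eq]
  exact ((L.hasFDerivAt.comp_hasDerivAt t (hg.differentiableAt hnhds).hasDerivAt).deriv).symm

theorem ContinuousLinearMap.apply_iteratedDeriv_succ_eqOn {f ξ : 𝕜 → E} {n : ℕ}
    (hU : IsOpen U) (hf : ∀ i < n, DifferentiableOn 𝕜 (iteratedDeriv i f) U)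
    (hξ : ∀ i < n, DifferentiableOn 𝕜 (iteratedDeriv i ξ) U)
    (hdae : EqOn (fun t => L (deriv ξ t)) (ξ + f) U) :
    ∀ j < n, EqOn (fun t => L (iteratedDeriv (j + 1) ξ t))
      (iteratedDeriv j ξ + iteratedDeriv j f) U := by
  intro j
  induction j with
  | zero => intro _; simpa only [zero_add, iteratedDeriv_one, iteratedDeriv_zero] using hdae
  | succ j ih =>
    intro hj t ht
    have hj' : j < n := j.lt_succ_self.trans hj
    have hnhds : U ∈ nhds t := hU.mem_nhds ht
    rw [iteratedDeriv_succ, L.apply_deriv_eqOn hU (hξ (j + 1) hj) (ih hj') ht,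
      deriv_add ((hξ j hj').differentiableAt hnhds) ((hf j hj').differentiableAt hnhds)]
    simp only [Pi.add_apply, iteratedDeriv_succ]

end Derivatives

theorem nilpotent_dae_explicit_solution_general
    {d : ℕ} (N : Matrix (Fin d) (Fin d) ℂ) (κ : ℕ) (hN : N ^ κ = 0)
    (I : Set ℝ) (hIopen : IsOpen I)
    (f ξ : ℝ → (Fin d → ℂ))
    (hf : ∀ i < κ, DifferentiableOn ℝ (iteratedDeriv i f) I)
    (hξ : ∀ i < κ, DifferentiableOn ℝ (iteratedDeriv i ξ) I)
    (hdae : ∀ t ∈ I, N.mulVec (deriv ξ t) = ξ t + f t) :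
    ∀ t ∈ I, ξ t = -∑ i ∈ Finset.range κ, (N ^ i).mulVec (iteratedDeriv i f t) := by
  intro t ht
  let L : (Fin d → ℂ) →L[ℝ] (Fin d → ℂ) :=
    ((Matrix.toLin' N).restrictScalars ℝ).toContinuousLinearMap
  have hrel := L.apply_iteratedDeriv_succ_eqOn hIopen hf hξ hdae
  have htele := Module.End.eq_pow_apply_sub_sum_of_apply_succ_eq (Matrix.toLin' N)
    (g := fun j => iteratedDeriv j ξ t) (h := fun j => iteratedDeriv j f t)
    fun j hj => hrel j hj ht
  simpa [← Matrix.toLin'_pow, hN] using htele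

/-- **explicit solution of the nilpotent DAE, Proposition 1, eq. (9).**
Let `N` be nilpotent with `N^κ = 0`, let `I` be an open interval, let
`f, ξ : I → ℂ^d` be `κ`-times differentiable with `N ξ'(t) = ξ(t) + f(t)` on `I`.
Then `ξ(t) = -∑_{i=0}^{κ-1} N^i f^{(i)}(t)` for all `t ∈ I`. -/
theorem nilpotent_dae_explicit_solution
    {d : ℕ} (N : Matrix (Fin d) (Fin d) ℂ) (κ : ℕ) (hN : N ^ κ = 0)
    (I : Set ℝ) (hIopen : IsOpen I) (hIinterval : I.OrdConnected)
    (f ξ : ℝ → (Fin d → ℂ))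
    (hf : ∀ i < κ, DifferentiableOn ℝ (iteratedDeriv i f) I)
    (hξ : ∀ i < κ, DifferentiableOn ℝ (iteratedDeriv i ξ) I)
    (hdae : ∀ t ∈ I, N.mulVec (deriv ξ t) = ξ t + f t) :
    ∀ t ∈ I, ξ t = -∑ i ∈ Finset.range κ, (N ^ i).mulVec (iteratedDeriv i f t) :=
  nilpotent_dae_explicit_solution_general N κ hN I hIopen f ξ hf hξ hdae
end

section
/- Uniqueness for regular linear constant-coefficient differential-algebraic equations (Proposition 1 / Corollary 1, sufficiency): Let D, M ∈ ℂ^{k×k} be such that the pencil sD − M is regular, let f : [a,b] → ℂ^k, and let ξ₁, ξ₂ : [a,b] → ℂ^k be k-times continuously differentiable functions satisfying D ξ_j'(t) = M ξ_j(t) + f(t) for all t ∈ [a,b] (j = 1, 2) and ξ₁(a) = ξ₂(a). Then ξ₁(t) = ξ₂(t) for all t ∈ [a,b]. -/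
/-!
With `w t = exp (-s₀ t) • (ξ₁ t - ξ₂ t)` the DAE becomes `w = B w'` for `B = -(s₀ D - M)⁻¹ D`,
and `w a = 0`. Cayley–Hamilton gives `m` and `C` with `B ^ m = C B ^ (m + 1)`, so `u = B ^ m w`
solves the linear ODE `u' = C u` with `u a = 0` and therefore vanishes. Descending from there,
`B ^ (j + 1) w ≡ 0` forces `B ^ j w = B ^ (j + 1) w' = (B ^ (j + 1) w)' = 0`, so `w ≡ 0`.
-/

open Set Matrix

open Polynomial in
theorem Matrix.exists_pow_eq_mul_pow_succ {K n : Type*} [Field K] [Fintype n] [DecidableEq n]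
    (B : Matrix n n K) : ∃ (m : ℕ) (C : Matrix n n K), B ^ m = C * B ^ (m + 1) := by
  obtain ⟨q, hpq, hq⟩ :=
    B.charpoly.exists_eq_pow_rootMultiplicity_mul_and_not_dvd B.charpoly_monic.ne_zero 0
  rw [map_zero, sub_zero] at hpq hq
  have hq0 : q.coeff 0 ≠ 0 := fun h => hq (X_dvd_iff.mpr h)
  set m := B.charpoly.rootMultiplicity 0
  have hsplit : B.charpoly = C (q.coeff 0) * X ^ m + q.divX * X ^ (m + 1) := by
    linear_combination hpq - X ^ m * q.divX_mul_X_add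
  have h := B.aeval_self_charpoly
  simp only [hsplit, map_add, map_mul, aeval_C, map_pow, aeval_X, Algebra.algebraMap_eq_smul_one,
    smul_mul_assoc, one_mul] at h
  refine ⟨m, -(q.coeff 0)⁻¹ • aeval B q.divX, ?_⟩
  rw [neg_smul, neg_mul, smul_mul_assoc, ← smul_neg, ← eq_neg_of_add_eq_zero_left h,
    inv_smul_smul₀ hq0]

section

variable {𝕜 n : Type*} [RCLike 𝕜] [Fintype n] {a b : ℝ}

theorem HasDerivWithinAt.matrix_mulVec (A : Matrix n n 𝕜)
    {w : ℝ → n → 𝕜} {w' : n → 𝕜} {s : Set ℝ} {t : ℝ} (h : HasDerivWithinAt w w' s t) :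
    HasDerivWithinAt (fun t => A *ᵥ w t) (A *ᵥ w') s t := by
  simpa [Function.comp_def] using
    (A.mulVecLin.toContinuousLinearMap.restrictScalars ℝ).hasFDerivAt.comp_hasDerivWithinAt t h

theorem eqOn_zero_of_hasDerivWithinAt_mulVec (C : Matrix n n 𝕜) {u : ℝ → n → 𝕜}
    (hu : ∀ t ∈ Icc a b, HasDerivWithinAt u (C *ᵥ u t) (Icc a b) t) (ha : u a = 0) :
    EqOn u 0 (Icc a b) := by
  set L := LinearMap.toContinuousLinearMap C.mulVecLin
  have hu' : ∀ t ∈ Ico a b, HasDerivWithinAt u (L (u t)) (Ici t) t := fun t ht =>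
    (hu t (Ico_subset_Icc_self ht)).mono_of_mem_nhdsWithin (Icc_mem_nhdsGE_of_mem ht)
  have hzero : ∀ t ∈ Ico a b, HasDerivWithinAt (fun _ => 0) (L 0) (Ici t) t := fun t _ => by
    simpa only [map_zero] using hasDerivWithinAt_const t (Ici t) (0 : n → 𝕜)
  exact ODE_solution_unique_of_mem_Icc_right (v := fun _ => L) (s := fun _ => univ)
    (fun _ _ => L.lipschitz.lipschitzOnWith)
    (fun t ht => (hu t ht).continuousWithinAt) hu' (fun _ _ => mem_univ _)
    continuousOn_const hzero (fun _ _ => mem_univ _) ha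

variable [DecidableEq n] {B : Matrix n n 𝕜} {w w' : ℝ → n → 𝕜}

theorem eqOn_zero_of_pow_mulVec_eqOn_zero (hab : a < b)
    (hw : ∀ t ∈ Icc a b, HasDerivWithinAt w (w' t) (Icc a b) t)
    (hB : ∀ t ∈ Icc a b, w t = B *ᵥ w' t) (m : ℕ)
    (hm : EqOn (fun t => B ^ m *ᵥ w t) 0 (Icc a b)) : EqOn w 0 (Icc a b) := by
  induction m with
  | zero => simpa using hm
  | succ j ih =>
    refine ih fun t ht => ?_
    have hderiv : HasDerivWithinAt (fun t => B ^ (j + 1) *ᵥ w t) (B ^ (j + 1) *ᵥ w' t)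
        (Icc a b) t := (hw t ht).matrix_mulVec _
    have hconst : HasDerivWithinAt (fun t => B ^ (j + 1) *ᵥ w t) 0 (Icc a b) t :=
      (hasDerivWithinAt_const t _ 0).congr hm (hm ht)
    calc B ^ j *ᵥ w t = B ^ (j + 1) *ᵥ w' t := by rw [hB t ht, mulVec_mulVec, pow_succ]
      _ = 0 := (uniqueDiffOn_Icc hab t ht).eq_deriv _ hderiv hconst

theorem eqOn_zero_of_eq_mulVec_deriv
    (hw : ∀ t ∈ Icc a b, HasDerivWithinAt w (w' t) (Icc a b) t)
    (hB : ∀ t ∈ Icc a b, w t = B *ᵥ w' t) (ha : w a = 0) : EqOn w 0 (Icc a b) := by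
  rcases le_or_gt b a with hba | hab
  · intro t ht
    rwa [le_antisymm (ht.2.trans hba) ht.1]
  obtain ⟨m, C, hC⟩ := B.exists_pow_eq_mul_pow_succ
  refine eqOn_zero_of_pow_mulVec_eqOn_zero hab hw hB m
    (eqOn_zero_of_hasDerivWithinAt_mulVec C (fun t ht => ?_) (by simp [ha]))
  convert (hw t ht).matrix_mulVec (B ^ m) using 1
  rw [hB t ht, mulVec_mulVec, mulVec_mulVec, mul_assoc, ← pow_succ, ← hC]

end

theorem Matrix.eq_neg_inv_mul_mulVec_of_mulVec_eq {K n : Type*} [Field K] [Fintype n]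
    [DecidableEq n] {D M : Matrix n n K} {s₀ : K} (hs₀ : (s₀ • D - M).det ≠ 0) {x y : n → K}
    (h : D *ᵥ y = M *ᵥ x) : x = -((s₀ • D - M)⁻¹ * D) *ᵥ (y - s₀ • x) := by
  have hE : (s₀ • D - M) *ᵥ x = -(D *ᵥ (y - s₀ • x)) := by
    rw [sub_mulVec, smul_mulVec, mulVec_sub, mulVec_smul, h, neg_sub]
  calc x = ((s₀ • D - M)⁻¹ * (s₀ • D - M)) *ᵥ x := by
        rw [nonsing_inv_mul _ (isUnit_iff_ne_zero.mpr hs₀), one_mulVec]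
    _ = _ := by rw [← mulVec_mulVec, hE, mulVec_neg, neg_mulVec, mulVec_mulVec]

theorem HasDerivWithinAt.cexp_mul_smul {E : Type*} [NormedAddCommGroup E] [NormedSpace ℂ E]
    {ζ : ℝ → E} {ζ' : E} {s : Set ℝ} {t : ℝ} (c : ℂ) (h : HasDerivWithinAt ζ ζ' s t) :
    HasDerivWithinAt (fun t : ℝ => Complex.exp (c * t) • ζ t)
      (Complex.exp (c * t) • (ζ' + c • ζ t)) s t := by
  have hexp : HasDerivAt (fun t : ℝ => Complex.exp (c * t)) (Complex.exp (c * t) * c) t := by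
    simpa using (((hasDerivAt_id t).ofReal_comp).const_mul c).cexp
  refine (hexp.hasDerivWithinAt.smul h).congr_deriv ?_
  rw [smul_add, smul_smul, add_comm]

theorem regular_dae_uniqueness_general
    {k : ℕ} (D M : Matrix (Fin k) (Fin k) ℂ)
    (hreg : ∃ s₀ : ℂ, (s₀ • D - M).det ≠ 0)
    (a b : ℝ) (f : ℝ → (Fin k → ℂ))
    (ξ₁ ξ₂ : ℝ → (Fin k → ℂ))
    (hξ₁ : ContDiffOn ℝ k ξ₁ (Set.Icc a b))
    (hξ₂ : ContDiffOn ℝ k ξ₂ (Set.Icc a b))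
    (hdae₁ : ∀ t ∈ Set.Icc a b,
      D.mulVec (derivWithin ξ₁ (Set.Icc a b) t) = M.mulVec (ξ₁ t) + f t)
    (hdae₂ : ∀ t ∈ Set.Icc a b,
      D.mulVec (derivWithin ξ₂ (Set.Icc a b) t) = M.mulVec (ξ₂ t) + f t)
    (hinit : ξ₁ a = ξ₂ a) :
    ∀ t ∈ Set.Icc a b, ξ₁ t = ξ₂ t := by
  obtain rfl | hk := Nat.eq_zero_or_pos k
  · exact fun t _ => Subsingleton.elim _ _
  obtain ⟨s₀, hs₀⟩ := hreg
  have hderiv {ξ : ℝ → Fin k → ℂ} (hξ : ContDiffOn ℝ k ξ (Icc a b)) (t) (ht : t ∈ Icc a b) :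
      HasDerivWithinAt ξ (derivWithin ξ (Icc a b) t) (Icc a b) t :=
    (hξ.differentiableOn (by exact_mod_cast hk.ne') t ht).hasDerivWithinAt
  set ζ := fun t => ξ₁ t - ξ₂ t
  set ζ' := fun t => derivWithin ξ₁ (Icc a b) t - derivWithin ξ₂ (Icc a b) t
  have hζ (t) (ht : t ∈ Icc a b) : D *ᵥ ζ' t = M *ᵥ ζ t := by
    simp only [ζ, ζ', mulVec_sub, hdae₁ t ht, hdae₂ t ht, add_sub_add_right_eq_sub]
  have hw : EqOn (fun t : ℝ => Complex.exp (-s₀ * t) • ζ t) 0 (Icc a b) :=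
    eqOn_zero_of_eq_mulVec_deriv (B := -((s₀ • D - M)⁻¹ * D))
      (fun t ht => ((hderiv hξ₁ t ht).sub (hderiv hξ₂ t ht)).cexp_mul_smul (-s₀))
      (fun t ht => by
        rw [mulVec_smul, neg_smul, ← sub_eq_add_neg]
        exact congrArg _ (eq_neg_inv_mul_mulVec_of_mulVec_eq hs₀ (hζ t ht)))
      (by simp [ζ, hinit])
  intro t ht
  simpa [ζ, sub_eq_zero, Complex.exp_ne_zero] using hw ht

/-- **uniqueness for regular linear constant-coefficient DAEs.**
If the pencil `s D - M` is regular, `f : [a,b] → ℂ^k`, and `ξ₁, ξ₂` are `k`-times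
continuously differentiable solutions of `D ξ' = M ξ + f` on `[a,b]` with
`ξ₁(a) = ξ₂(a)`, then `ξ₁ = ξ₂` on `[a,b]`. -/
theorem regular_dae_uniqueness
    {k : ℕ} (D M : Matrix (Fin k) (Fin k) ℂ)
    (hreg : ∃ s₀ : ℂ, (s₀ • D - M).det ≠ 0)
    (a b : ℝ) (hab : a ≤ b) (f : ℝ → (Fin k → ℂ))
    (ξ₁ ξ₂ : ℝ → (Fin k → ℂ))
    (hξ₁ : ContDiffOn ℝ k ξ₁ (Set.Icc a b))
    (hξ₂ : ContDiffOn ℝ k ξ₂ (Set.Icc a b))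
    (hdae₁ : ∀ t ∈ Set.Icc a b,
      D.mulVec (derivWithin ξ₁ (Set.Icc a b) t) = M.mulVec (ξ₁ t) + f t)
    (hdae₂ : ∀ t ∈ Set.Icc a b,
      D.mulVec (derivWithin ξ₂ (Set.Icc a b) t) = M.mulVec (ξ₂ t) + f t)
    (hinit : ξ₁ a = ξ₂ a) :
    ∀ t ∈ Set.Icc a b, ξ₁ t = ξ₂ t :=
  regular_dae_uniqueness_general D M hreg a b f ξ₁ ξ₂ hξ₁ hξ₂ hdae₁ hdae₂ hinit
end

section
/- Strict dissipativity plus exponential reachability implies the time-varying measure turnpike property (Proposition 2): In the DHN optimal control setting, let z̄ be a bounded reference pair and assume: (i) strict dissipativity with respect to z̄, i.e., there exist a class-K function α, s ≥ 0 and S : [0,∞) × ℝⁿ → [s, ∞) with sup_{x₀ ∈ X₀} S(0, x₀) < ∞, such that for all x₀ ∈ X₀, all T ≥ 0 and all optimal pairs z*_T of OCP_T(x₀): S(T, x*_T(T)) − S(0, x₀) ≤ ∫₀^T [ℓ_{z̄}(τ, z*_T(τ)) − α(‖z*_T(τ) − z̄(τ)‖)] dτ; (ii) exponential reachability of z̄: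 there exist c₁, c₂ > 0 (independent of x₀) such that for every x₀ ∈ X₀ there is an admissible infinite-horizon pair (x, u) satisfying the dynamics with x(0) = x₀ and ‖(x(τ), u(τ)) − z̄(τ)‖ ≤ c₁ e^{−c₂ τ} for all τ ≥ 0. Then there exists a function ν : (0,∞) → [0,∞) such that for all x₀ ∈ X₀, all T > 0, all optimal pairs z*_T of OCP_T(x₀) and all ε > 0: μ(Θ_T(ε)) ≤ ν(ε) < ∞. -/
/-!
Compare an optimal pair with the exponentially reaching pair `v` of (ii). Since the stage cost is
Lipschitz on bounded sets uniformly in time, `J_T(x₀, v) - ∫₀ᵀ ℓ(z̄) ≤ L c₁ / c₂`, and by optimality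
the same bound holds for `J_T(x₀, u*)`. Strict dissipativity, with the storage function bounded
below by `s` and at time `0` above by `Smax`, then bounds `∫₀ᵀ α(‖z*_T - z̄‖)` by
`K = L c₁ / c₂ + Smax - s`, independently of `x₀` and `T`; Markov's inequality gives
`μ(Θ_T(ε)) ≤ K / α(ε)`.
-/

open MeasureTheory NormedSpace
open scoped Matrix

/-- The data of the district-heating-network (DHN) optimal control setting:
dynamics `ẋ = A x + B u + E d`, control constraint box
`U = ∏ᵢ [umin i, umax i]`, stage cost
`ℓ(τ,x,u) = ½ xᵀQx + uᵀSx + xᵀ r(τ) + uᵀ p(τ)`, and a compact set `X₀`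
of initial conditions; `d, r, p` are measurable and bounded on `[0,∞)`. -/
structure DHNSetting (n m w : ℕ) where
  A : Matrix (Fin n) (Fin n) ℝ
  B : Matrix (Fin n) (Fin m) ℝ
  E : Matrix (Fin n) (Fin w) ℝ
  d : ℝ → Fin w → ℝ
  d_meas : Measurable d
  d_bdd : ∃ C, ∀ τ : ℝ, 0 ≤ τ → ‖d τ‖ ≤ C
  umin : Fin m → ℝ
  umax : Fin m → ℝ
  u_lt : ∀ i, umin i < umax i
  Q : Matrix (Fin n) (Fin n) ℝ
  Q_symm : Q.IsSymm
  S : Matrix (Fin m) (Fin n) ℝ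
  r : ℝ → Fin n → ℝ
  r_meas : Measurable r
  r_bdd : ∃ C, ∀ τ : ℝ, 0 ≤ τ → ‖r τ‖ ≤ C
  p : ℝ → Fin m → ℝ
  p_meas : Measurable p
  p_bdd : ∃ C, ∀ τ : ℝ, 0 ≤ τ → ‖p τ‖ ≤ C
  X₀ : Set (Fin n → ℝ)
  X₀_compact : IsCompact X₀

namespace DHNSetting

variable {n m w : ℕ} (P : DHNSetting n m w)

/-- The control constraint box `U = ∏ᵢ [umin i, umax i] ⊂ ℝᵐ`. -/
def U : Set (Fin m → ℝ) := {u | ∀ i, u i ∈ Set.Icc (P.umin i) (P.umax i)}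

/-- The stage cost `ℓ(τ,x,u) = ½ xᵀQx + uᵀSx + xᵀ r(τ) + uᵀ p(τ)`. -/
noncomputable def ell (τ : ℝ) (x : Fin n → ℝ) (u : Fin m → ℝ) : ℝ :=
  (1 / 2) * (x ⬝ᵥ P.Q.mulVec x) + (u ⬝ᵥ P.S.mulVec x) + (x ⬝ᵥ P.r τ) + (u ⬝ᵥ P.p τ)

/-- The state trajectory of `ẋ = A x + B u + E d`, `x(0) = x₀`, given by the
variation-of-constants formula. -/
noncomputable def traj (u : ℝ → Fin m → ℝ) (x₀ : Fin n → ℝ) (t : ℝ) : Fin n → ℝ :=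
  (exp (t • P.A)).mulVec x₀ +
    ∫ s in (0:ℝ)..t,
      (exp ((t - s) • P.A)).mulVec (P.B.mulVec (u s) + P.E.mulVec (P.d s))

/-- A control is admissible on `[0,T]` if it is measurable and takes values in
`U` almost everywhere on `[0,T]`. -/
def Admissible (T : ℝ) (u : ℝ → Fin m → ℝ) : Prop :=
  Measurable u ∧ ∀ᵐ τ ∂(volume.restrict (Set.Icc (0:ℝ) T)), u τ ∈ P.U

/-- The cost functional `J_T(x₀, u) = ∫₀^T ℓ(τ, x_u(τ; x₀), u(τ)) dτ`. -/
noncomputable def cost (T : ℝ) (x₀ : Fin n → ℝ) (u : ℝ → Fin m → ℝ) : ℝ :=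
  ∫ τ in (0:ℝ)..T, P.ell τ (P.traj u x₀ τ) (u τ)

/-- A control is optimal for `OCP_T(x₀)` if it is admissible and minimizes the
cost functional over all admissible controls. -/
def IsOptimal (T : ℝ) (x₀ : Fin n → ℝ) (u : ℝ → Fin m → ℝ) : Prop :=
  P.Admissible T u ∧ ∀ u', P.Admissible T u' → P.cost T x₀ u ≤ P.cost T x₀ u'

/-- A reference pair `z̄ = (x̄, ū)` is an admissible infinite-horizon pair
satisfying the dynamics. -/
def IsReferencePair (xbar : ℝ → Fin n → ℝ) (ubar : ℝ → Fin m → ℝ) : Prop :=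
  Measurable ubar ∧ (∀ τ : ℝ, 0 ≤ τ → ubar τ ∈ P.U) ∧
    ∀ t : ℝ, 0 ≤ t → xbar t = P.traj ubar (xbar 0) t

end DHNSetting

/-- A class-K function: continuous, strictly increasing on `[0,∞)`, `α 0 = 0`. -/
def IsClassK (α : ℝ → ℝ) : Prop :=
  ContinuousOn α (Set.Ici 0) ∧ StrictMonoOn α (Set.Ici 0) ∧ α 0 = 0

open Set

lemma Matrix.exists_abs_dotProduct_mulVec_le {k l : ℕ} (M : Matrix (Fin k) (Fin l) ℝ) :
    ∃ C, 0 ≤ C ∧ ∀ x y, |x ⬝ᵥ M *ᵥ y| ≤ C * ‖x‖ * ‖y‖ := by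
  let B : (Fin k → ℝ) →L[ℝ] (Fin l → ℝ) →L[ℝ] ℝ :=
    (LinearMap.toContinuousLinearMap.toLinearMap ∘ₗ Matrix.toLinearMap₂' ℝ M).toContinuousLinearMap
  refine ⟨‖B‖, B.opNorm_nonneg, fun x y => ?_⟩
  simpa [B, Matrix.toLinearMap₂'_apply'] using B.le_opNorm₂ x y

lemma Matrix.continuous_exp_smul {k : ℕ} (A : Matrix (Fin k) (Fin k) ℝ) :
    Continuous fun t : ℝ => exp (t • A) := by
  -- `exp` does not depend on the choice of normed-algebra structure.
  let _ : NormedRing (Matrix (Fin k) (Fin k) ℝ) := Matrix.linftyOpNormedRing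
  let _ : NormedAlgebra ℝ (Matrix (Fin k) (Fin k) ℝ) := Matrix.linftyOpNormedAlgebra
  let _ : NormedAlgebra ℚ (Matrix (Fin k) (Fin k) ℝ) := .restrictScalars ℚ ℝ _
  exact exp_continuous.comp (continuous_id.smul continuous_const)

lemma MeasureTheory.IntegrableOn.continuousOn_mulVec {k l : ℕ} {K : Set ℝ}
    {M : ℝ → Matrix (Fin k) (Fin l) ℝ} {f : ℝ → Fin l → ℝ} (hM : ContinuousOn M K)
    (hf : IntegrableOn f K) (hK : IsCompact K) :
    IntegrableOn (fun s => M s *ᵥ f s) K := by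
  refine integrable_pi_iff.mpr fun i => ?_
  simp only [Matrix.mulVec, dotProduct]
  refine integrable_finsetSum _ fun j _ => ?_
  exact IntegrableOn.continuousOn_mul ((continuous_apply_apply i j).comp_continuousOn hM)
    (integrable_pi_iff.mp hf j) hK

lemma intervalIntegral_le_div_of_le_mul_exp {f : ℝ → ℝ} {C c T : ℝ} (hC : 0 ≤ C) (hc : 0 < c)
    (hT : 0 ≤ T) (hf : IntervalIntegrable f volume 0 T)
    (hle : ∀ τ ∈ Icc 0 T, f τ ≤ C * Real.exp (-c * τ)) :
    ∫ τ in (0:ℝ)..T, f τ ≤ C / c := by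
  have hexp : IntegrableOn (fun τ => Real.exp (-c * τ)) (Ioi 0) :=
    integrableOn_exp_mul_Ioi (by linarith) 0
  calc ∫ τ in (0:ℝ)..T, f τ ≤ ∫ τ in (0:ℝ)..T, C * Real.exp (-c * τ) :=
        intervalIntegral.integral_mono_on hT hf
          ((by fun_prop : Continuous _).intervalIntegrable _ _) hle
    _ = C * ∫ τ in Ioc 0 T, Real.exp (-c * τ) := by
        rw [intervalIntegral.integral_const_mul, intervalIntegral.integral_of_le hT]
    _ ≤ C * ∫ τ in Ioi 0, Real.exp (-c * τ) := by
        refine mul_le_mul_of_nonneg_left ?_ hC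
        exact setIntegral_mono_set hexp (.of_forall fun _ => (Real.exp_pos _).le)
          Ioc_subset_Ioi_self.eventuallyLE
    _ = C / c := by
        rw [integral_exp_mul_Ioi (by linarith), mul_zero, Real.exp_zero]; field_simp

lemma IsClassK.pos {α : ℝ → ℝ} (hα : IsClassK α) {t : ℝ} (ht : 0 < t) : 0 < α t := by
  simpa [hα.2.2] using hα.2.1 (mem_Ici.2 le_rfl) ht.le ht

lemma IsClassK.nonneg {α : ℝ → ℝ} (hα : IsClassK α) {t : ℝ} (ht : 0 ≤ t) : 0 ≤ α t :=
  ht.eq_or_lt.elim (fun h => h ▸ hα.2.2.ge) fun h => (hα.pos h).le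

lemma IsClassK.continuous_comp_norm {α : ℝ → ℝ} (hα : IsClassK α) {E : Type*}
    [SeminormedAddCommGroup E] : Continuous fun z : E => α ‖z‖ :=
  hα.1.comp_continuous continuous_norm fun z => norm_nonneg z

lemma IsClassK.measure_lt_le_integral_div {X : Type*} [MeasurableSpace X] {μ : Measure X}
    [IsFiniteMeasure μ] {α : ℝ → ℝ} (hα : IsClassK α) {g : X → ℝ} (hg : ∀ x, 0 ≤ g x)
    (hint : Integrable (fun x => α (g x)) μ) {ε : ℝ} (hε : 0 < ε) :
    μ {x | ε < g x} ≤ ENNReal.ofReal ((∫ x, α (g x) ∂μ) / α ε) := by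
  have hsub : {x | ε < g x} ⊆ {x | α ε ≤ α (g x)} := fun x hx =>
    (hα.2.1 (mem_Ici.2 hε.le) (mem_Ici.2 (hg x)) hx).le
  have hmarkov := mul_meas_ge_le_integral_of_nonneg
    (.of_forall fun x => hα.nonneg (hg x)) hint (α ε)
  calc μ {x | ε < g x} ≤ μ {x | α ε ≤ α (g x)} := measure_mono hsub
    _ = ENNReal.ofReal (μ.real {x | α ε ≤ α (g x)}) := (ofReal_measureReal).symm
    _ ≤ _ := ENNReal.ofReal_le_ofReal ((le_div_iff₀' (hα.pos hε)).2 hmarkov)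

namespace DHNSetting

variable {n m w : ℕ} (P : DHNSetting n m w)

lemma norm_le_of_mem_U {v : Fin m → ℝ} (hv : v ∈ P.U) : ‖v‖ ≤ max ‖P.umin‖ ‖P.umax‖ := by
  refine (pi_norm_le_iff_of_nonneg (le_max_of_le_left (norm_nonneg _))).2 fun i => ?_
  exact (abs_le_max_abs_abs (hv i).1 (hv i).2).trans
    (max_le_max (norm_le_pi_norm P.umin i) (norm_le_pi_norm P.umax i))

lemma admissible_of_forall_mem_U {u : ℝ → Fin m → ℝ} (hu : Measurable u)
    (hU : ∀ τ, 0 ≤ τ → u τ ∈ P.U) (T : ℝ) : P.Admissible T u :=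
  ⟨hu, (ae_restrict_mem measurableSet_Icc).mono fun τ hτ => hU τ hτ.1⟩

lemma integrableOn_traj_integrand {T : ℝ} {u : ℝ → Fin m → ℝ} (hu : IntegrableOn u (Icc 0 T)) :
    IntegrableOn (fun s => exp ((-s) • P.A) *ᵥ (P.B *ᵥ u s + P.E *ᵥ P.d s)) (Icc 0 T) := by
  obtain ⟨Cd, hCd⟩ := P.d_bdd
  have hd : IntegrableOn P.d (Icc 0 T) :=
    Measure.integrableOn_of_bounded (M := Cd) measure_Icc_lt_top.ne
      P.d_meas.aestronglyMeasurable
      ((ae_restrict_mem measurableSet_Icc).mono fun τ hτ => hCd τ hτ.1)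
  refine IntegrableOn.continuousOn_mulVec
    ((Matrix.continuous_exp_smul P.A).comp continuous_neg).continuousOn ?_ isCompact_Icc
  exact (hu.continuousOn_mulVec (M := fun _ => P.B) continuousOn_const isCompact_Icc).add
    (hd.continuousOn_mulVec (M := fun _ => P.E) continuousOn_const isCompact_Icc)

lemma traj_eq_exp_mulVec {u : ℝ → Fin m → ℝ} (x₀ : Fin n → ℝ) {t : ℝ}
    (h : IntervalIntegrable (fun s => exp ((-s) • P.A) *ᵥ (P.B *ᵥ u s + P.E *ᵥ P.d s))
      volume 0 t) :
    P.traj u x₀ t = exp (t • P.A) *ᵥ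
      (x₀ + ∫ s in (0:ℝ)..t, exp ((-s) • P.A) *ᵥ (P.B *ᵥ u s + P.E *ᵥ P.d s)) := by
  have hsplit : ∀ s : ℝ, exp ((t - s) • P.A) *ᵥ (P.B *ᵥ u s + P.E *ᵥ P.d s) =
      exp (t • P.A) *ᵥ (exp ((-s) • P.A) *ᵥ (P.B *ᵥ u s + P.E *ᵥ P.d s)) := fun s => by
    rw [Matrix.mulVec_mulVec, ← Matrix.exp_add_of_commute _ _
      (((Commute.refl P.A).smul_left t).smul_right (-s)), sub_eq_add_neg, add_smul]
  rw [traj, Matrix.mulVec_add]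
  simp_rw [hsplit]
  congr 1
  simpa [Matrix.mulVecLin] using
    (Matrix.mulVecLin (exp (t • P.A))).toContinuousLinearMap.intervalIntegral_comp_comm h

lemma continuousOn_traj {T : ℝ} {u : ℝ → Fin m → ℝ} (hu : IntegrableOn u (Icc 0 T))
    (x₀ : Fin n → ℝ) : ContinuousOn (P.traj u x₀) (Icc 0 T) := by
  rcases lt_or_ge T 0 with hT | hT
  · simp [Icc_eq_empty_of_lt hT]
  have hint := P.integrableOn_traj_integrand hu
  have hprim := intervalIntegral.continuousOn_primitive_interval (μ := volume)
    (by rwa [uIcc_of_le hT] : IntegrableOn _ (uIcc 0 T))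
  rw [uIcc_of_le hT] at hprim
  refine ContinuousOn.congr (f := fun t => exp (t • P.A) *ᵥ (x₀ + _)) ?_ fun t ht =>
    P.traj_eq_exp_mulVec x₀ ((intervalIntegrable_iff_integrableOn_Icc_of_le ht.1).2
      (hint.mono_set (Icc_subset_Icc_right ht.2)))
  exact (continuous_fst.matrix_mulVec continuous_snd).comp_continuousOn
    ((Matrix.continuous_exp_smul P.A).continuousOn.prodMk (continuousOn_const.add hprim))

lemma ell_zero_zero (τ : ℝ) : P.ell τ 0 0 = 0 := by simp [ell]

lemma ell_sub_ell (τ : ℝ) (x x' : Fin n → ℝ) (u u' : Fin m → ℝ) :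
    P.ell τ x u - P.ell τ x' u' =
      (1 / 2) * ((x - x') ⬝ᵥ P.Q *ᵥ x + x' ⬝ᵥ P.Q *ᵥ (x - x'))
      + ((u - u') ⬝ᵥ P.S *ᵥ x + u' ⬝ᵥ P.S *ᵥ (x - x'))
      + (x - x') ⬝ᵥ P.r τ + (u - u') ⬝ᵥ P.p τ := by
  simp only [ell, sub_dotProduct, Matrix.mulVec_sub, dotProduct_sub]
  ring

lemma exists_abs_ell_sub_le (M : ℝ) :
    ∃ L, 0 ≤ L ∧ ∀ τ, 0 ≤ τ → ∀ x x' u u', ‖(x, u)‖ ≤ M → ‖(x', u')‖ ≤ M →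
      |P.ell τ x u - P.ell τ x' u'| ≤ L * ‖(x - x', u - u')‖ := by
  obtain ⟨CQ, hCQ0, hCQ⟩ := P.Q.exists_abs_dotProduct_mulVec_le
  obtain ⟨CS, hCS0, hCS⟩ := P.S.exists_abs_dotProduct_mulVec_le
  obtain ⟨Cn, hCn0, hCn⟩ := (1 : Matrix (Fin n) (Fin n) ℝ).exists_abs_dotProduct_mulVec_le
  obtain ⟨Cm, hCm0, hCm⟩ := (1 : Matrix (Fin m) (Fin m) ℝ).exists_abs_dotProduct_mulVec_le
  simp only [Matrix.one_mulVec] at hCn hCm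
  obtain ⟨Cr, hCr⟩ := P.r_bdd
  obtain ⟨Cp, hCp⟩ := P.p_bdd
  have hCr0 : 0 ≤ Cr := (norm_nonneg _).trans (hCr 0 le_rfl)
  have hCp0 : 0 ≤ Cp := (norm_nonneg _).trans (hCp 0 le_rfl)
  refine ⟨CQ * |M| + 2 * CS * |M| + Cn * Cr + Cm * Cp, by positivity, ?_⟩
  intro τ hτ x x' u u' hxu hxu'
  set δ := ‖(x - x', u - u')‖
  have hx := (norm_fst_le (x, u)).trans (hxu.trans (le_abs_self M))
  have hx' := (norm_fst_le (x', u')).trans (hxu'.trans (le_abs_self M))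
  have hu' := (norm_snd_le (x', u')).trans (hxu'.trans (le_abs_self M))
  have hδx : ‖x - x'‖ ≤ δ := norm_fst_le (x - x', u - u')
  have hδu : ‖u - u'‖ ≤ δ := norm_snd_le (x - x', u - u')
  have b1 : |(x - x') ⬝ᵥ P.Q *ᵥ x| ≤ CQ * δ * |M| :=
    (hCQ _ _).trans (by gcongr)
  have b2 : |x' ⬝ᵥ P.Q *ᵥ (x - x')| ≤ CQ * |M| * δ :=
    (hCQ _ _).trans (by gcongr)
  have b3 : |(u - u') ⬝ᵥ P.S *ᵥ x| ≤ CS * δ * |M| :=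
    (hCS _ _).trans (by gcongr)
  have b4 : |u' ⬝ᵥ P.S *ᵥ (x - x')| ≤ CS * |M| * δ :=
    (hCS _ _).trans (by gcongr)
  have b5 : |(x - x') ⬝ᵥ P.r τ| ≤ Cn * δ * Cr :=
    (hCn _ _).trans (by gcongr; exact hCr τ hτ)
  have b6 : |(u - u') ⬝ᵥ P.p τ| ≤ Cm * δ * Cp :=
    (hCm _ _).trans (by gcongr; exact hCp τ hτ)
  rw [ell_sub_ell, abs_le]
  rw [abs_le] at b1 b2 b3 b4 b5 b6
  constructor <;> linarith

lemma aemeasurable_ell {μ : Measure ℝ} {x : ℝ → Fin n → ℝ} {u : ℝ → Fin m → ℝ}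
    (hxu : AEMeasurable (fun τ => (x τ, u τ)) μ) :
    AEMeasurable (fun τ => P.ell τ (x τ) (u τ)) μ := by
  have hG : Continuous fun q : ((Fin n → ℝ) × (Fin m → ℝ)) × ((Fin n → ℝ) × (Fin m → ℝ)) =>
      (1 / 2) * (q.1.1 ⬝ᵥ P.Q *ᵥ q.1.1) + q.1.2 ⬝ᵥ P.S *ᵥ q.1.1 + q.1.1 ⬝ᵥ q.2.1
        + q.1.2 ⬝ᵥ q.2.2 := by
    fun_prop
  exact hG.measurable.comp_aemeasurable (f := fun τ => ((x τ, u τ), (P.r τ, P.p τ)))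
    (hxu.prodMk (P.r_meas.prodMk P.p_meas).aemeasurable)

variable {P}

lemma Admissible.ae_norm_le {T : ℝ} {u : ℝ → Fin m → ℝ} (hu : P.Admissible T u) :
    ∀ᵐ τ ∂volume.restrict (Icc 0 T), ‖u τ‖ ≤ max ‖P.umin‖ ‖P.umax‖ :=
  hu.2.mono fun _ h => P.norm_le_of_mem_U h

lemma Admissible.integrableOn {T : ℝ} {u : ℝ → Fin m → ℝ} (hu : P.Admissible T u) :
    IntegrableOn u (Icc 0 T) :=
  Measure.integrableOn_of_bounded measure_Icc_lt_top.ne hu.1.aestronglyMeasurable hu.ae_norm_le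

lemma Admissible.aemeasurable_pair {T : ℝ} {u : ℝ → Fin m → ℝ} (hu : P.Admissible T u)
    (x₀ : Fin n → ℝ) :
    AEMeasurable (fun τ => (P.traj u x₀ τ, u τ)) (volume.restrict (Icc 0 T)) :=
  ((P.continuousOn_traj hu.integrableOn x₀).aemeasurable measurableSet_Icc).prodMk
    hu.1.aemeasurable

lemma Admissible.exists_ae_norm_pair_le {T : ℝ} {u : ℝ → Fin m → ℝ} (hu : P.Admissible T u)
    (x₀ : Fin n → ℝ) :
    ∃ R, 0 ≤ R ∧ ∀ᵐ τ ∂volume.restrict (Icc 0 T), ‖(P.traj u x₀ τ, u τ)‖ ≤ R := by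
  obtain ⟨Cx, hCx⟩ :=
    isCompact_Icc.exists_bound_of_continuousOn (P.continuousOn_traj hu.integrableOn x₀)
  refine ⟨max Cx (max ‖P.umin‖ ‖P.umax‖),
    le_max_of_le_right (le_max_of_le_left (norm_nonneg _)), ?_⟩
  filter_upwards [hu.ae_norm_le, ae_restrict_mem measurableSet_Icc] with τ huτ hτ
  exact norm_prod_le_iff.2 ⟨(hCx τ hτ).trans (le_max_left _ _), huτ.trans (le_max_right _ _)⟩

lemma Admissible.intervalIntegrable_ell {T : ℝ} {u : ℝ → Fin m → ℝ} (hu : P.Admissible T u)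
    (hT : 0 ≤ T) (x₀ : Fin n → ℝ) :
    IntervalIntegrable (fun τ => P.ell τ (P.traj u x₀ τ) (u τ)) volume 0 T := by
  obtain ⟨R, hR0, hR⟩ := hu.exists_ae_norm_pair_le x₀
  obtain ⟨L, hL0, hL⟩ := P.exists_abs_ell_sub_le R
  refine (intervalIntegrable_iff_integrableOn_Icc_of_le hT).2 <|
    Integrable.of_bound (P.aemeasurable_ell (hu.aemeasurable_pair x₀)).aestronglyMeasurable
      (L * R) ?_
  filter_upwards [hR, ae_restrict_mem measurableSet_Icc] with τ hτR hτ
  have hbound := hL τ hτ.1 _ 0 _ 0 hτR (by simpa using hR0)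
  rw [ell_zero_zero, sub_zero, sub_zero, sub_zero] at hbound
  exact hbound.trans (by gcongr)

lemma Admissible.integrableOn_comp_sub {T : ℝ} {u v : ℝ → Fin m → ℝ} (hu : P.Admissible T u)
    (hv : P.Admissible T v) (x₀ y₀ : Fin n → ℝ) {F : (Fin n → ℝ) × (Fin m → ℝ) → ℝ}
    (hF : Continuous F) :
    IntegrableOn (fun τ => F (P.traj u x₀ τ - P.traj v y₀ τ, u τ - v τ)) (Icc 0 T) := by
  obtain ⟨R₁, -, hR₁⟩ := hu.exists_ae_norm_pair_le x₀
  obtain ⟨R₂, -, hR₂⟩ := hv.exists_ae_norm_pair_le y₀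
  obtain ⟨CF, hCF⟩ :=
    (isCompact_closedBall (0 : (Fin n → ℝ) × (Fin m → ℝ)) (R₁ + R₂)).exists_bound_of_continuousOn
      hF.continuousOn
  refine Integrable.of_bound (hF.measurable.comp_aemeasurable
    ((hu.aemeasurable_pair x₀).sub (hv.aemeasurable_pair y₀))).aestronglyMeasurable CF ?_
  filter_upwards [hR₁, hR₂] with τ h₁ h₂
  refine hCF _ (mem_closedBall_zero_iff.2 ?_)
  rw [← Prod.mk_sub_mk]
  exact (norm_sub_le _ _).trans (add_le_add h₁ h₂)

variable {xbar : ℝ → Fin n → ℝ} {ubar : ℝ → Fin m → ℝ}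

lemma IsReferencePair.admissible (href : P.IsReferencePair xbar ubar) (T : ℝ) :
    P.Admissible T ubar :=
  P.admissible_of_forall_mem_U href.1 href.2.1 T

lemma IsReferencePair.eqOn_traj (href : P.IsReferencePair xbar ubar) (T : ℝ) :
    EqOn xbar (P.traj ubar (xbar 0)) (Icc 0 T) :=
  fun t ht => href.2.2 t ht.1

lemma IsReferencePair.intervalIntegrable_ell (href : P.IsReferencePair xbar ubar) {T : ℝ}
    (hT : 0 ≤ T) :
    IntervalIntegrable (fun τ => P.ell τ (xbar τ) (ubar τ)) volume 0 T := by
  refine ((href.admissible T).intervalIntegrable_ell hT (xbar 0)).congr fun τ hτ => ?_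
  rw [uIoc_of_le hT] at hτ
  rw [← href.eqOn_traj T (Ioc_subset_Icc_self hτ)]

lemma IsReferencePair.integrableOn_comp_sub (href : P.IsReferencePair xbar ubar) {T : ℝ}
    {u : ℝ → Fin m → ℝ} (hu : P.Admissible T u) (x₀ : Fin n → ℝ)
    {F : (Fin n → ℝ) × (Fin m → ℝ) → ℝ} (hF : Continuous F) :
    IntegrableOn (fun τ => F (P.traj u x₀ τ - xbar τ, u τ - ubar τ)) (Icc 0 T) :=
  (hu.integrableOn_comp_sub (href.admissible T) x₀ (xbar 0) hF).congr_fun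
    (fun τ hτ => by rw [href.eqOn_traj T hτ]) measurableSet_Icc

variable (P) in
lemma exists_cost_sub_integral_ell_le (Cb c₁ c₂ : ℝ) (hc₂ : 0 < c₂) :
    ∃ C, ∀ ⦃xbar : ℝ → Fin n → ℝ⦄ ⦃ubar : ℝ → Fin m → ℝ⦄, P.IsReferencePair xbar ubar →
      (∀ τ, 0 ≤ τ → ‖(xbar τ, ubar τ)‖ ≤ Cb) → ∀ ⦃T : ℝ⦄, 0 ≤ T →
      ∀ ⦃x₀ : Fin n → ℝ⦄ ⦃v : ℝ → Fin m → ℝ⦄, P.Admissible T v →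
      (∀ τ, 0 ≤ τ → ‖(P.traj v x₀ τ - xbar τ, v τ - ubar τ)‖ ≤ c₁ * Real.exp (-c₂ * τ)) →
      P.cost T x₀ v - ∫ τ in (0:ℝ)..T, P.ell τ (xbar τ) (ubar τ) ≤ C := by
  obtain ⟨L, hL0, hL⟩ := P.exists_abs_ell_sub_le (c₁ + Cb)
  refine ⟨L * c₁ / c₂, fun xbar ubar href hCb T hT x₀ v hv hclose => ?_⟩
  have hc₁ : 0 ≤ c₁ := by simpa using (norm_nonneg _).trans (hclose 0 le_rfl)
  have hv_int := hv.intervalIntegrable_ell hT x₀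
  have hbar_int := href.intervalIntegrable_ell hT
  rw [cost, ← intervalIntegral.integral_sub hv_int hbar_int]
  refine intervalIntegral_le_div_of_le_mul_exp (by positivity) hc₂ hT (hv_int.sub hbar_int)
    fun τ hτ => ?_
  have hclose_le : c₁ * Real.exp (-c₂ * τ) ≤ c₁ :=
    mul_le_of_le_one_right hc₁ (Real.exp_le_one_iff.2 (by nlinarith [hτ.1]))
  have hv_bdd : ‖(P.traj v x₀ τ, v τ)‖ ≤ c₁ + Cb :=
    calc ‖(P.traj v x₀ τ, v τ)‖
        = ‖(P.traj v x₀ τ - xbar τ, v τ - ubar τ) + (xbar τ, ubar τ)‖ := by simp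
      _ ≤ c₁ + Cb := (norm_add_le _ _).trans
          (add_le_add ((hclose τ hτ.1).trans hclose_le) (hCb τ hτ.1))
  calc P.ell τ (P.traj v x₀ τ) (v τ) - P.ell τ (xbar τ) (ubar τ)
      ≤ L * ‖(P.traj v x₀ τ - xbar τ, v τ - ubar τ)‖ :=
        (le_abs_self _).trans (hL τ hτ.1 _ _ _ _ hv_bdd
          ((hCb τ hτ.1).trans (le_add_of_nonneg_left hc₁)))
    _ ≤ L * (c₁ * Real.exp (-c₂ * τ)) := by gcongr; exact hclose τ hτ.1
    _ = L * c₁ * Real.exp (-c₂ * τ) := by ring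

end DHNSetting

theorem strict_dissipativity_implies_measure_turnpike_general
    {n m w : ℕ} (P : DHNSetting n m w)
    (xbar : ℝ → Fin n → ℝ) (ubar : ℝ → Fin m → ℝ)
    (href : P.IsReferencePair xbar ubar)
    (hbar_bdd : ∃ C, ∀ τ : ℝ, 0 ≤ τ → ‖(xbar τ, ubar τ)‖ ≤ C)
    -- (i) strict dissipativity with respect to `z̄`
    (α : ℝ → ℝ) (hα : IsClassK α)
    (s : ℝ)
    (St : ℝ → (Fin n → ℝ) → ℝ) (hSt_lb : ∀ t x, s ≤ St t x)
    (hSt_bdd : ∃ Smax, ∀ x₀ ∈ P.X₀, St 0 x₀ ≤ Smax)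
    (hdiss : ∀ x₀ ∈ P.X₀, ∀ T : ℝ, 0 ≤ T → ∀ u, P.IsOptimal T x₀ u →
      St T (P.traj u x₀ T) - St 0 x₀ ≤
        ∫ τ in (0:ℝ)..T,
          (P.ell τ (P.traj u x₀ τ) (u τ) - P.ell τ (xbar τ) (ubar τ)
            - α ‖(P.traj u x₀ τ - xbar τ, u τ - ubar τ)‖))
    -- (ii) exponential reachability of `z̄`
    (hreach : ∃ c₁ > (0:ℝ), ∃ c₂ > (0:ℝ), ∀ x₀ ∈ P.X₀,
      ∃ u : ℝ → Fin m → ℝ, Measurable u ∧ (∀ τ : ℝ, 0 ≤ τ → u τ ∈ P.U) ∧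
        ∀ τ : ℝ, 0 ≤ τ →
          ‖(P.traj u x₀ τ - xbar τ, u τ - ubar τ)‖ ≤ c₁ * Real.exp (-c₂ * τ)) :
    ∃ ν : ℝ → ℝ, (∀ ε > (0:ℝ), 0 ≤ ν ε) ∧
      ∀ x₀ ∈ P.X₀, ∀ T > (0:ℝ), ∀ u, P.IsOptimal T x₀ u → ∀ ε > (0:ℝ),
        MeasureTheory.volume
            {τ ∈ Set.Icc (0:ℝ) T |
              ε < ‖(P.traj u x₀ τ - xbar τ, u τ - ubar τ)‖} ≤
          ENNReal.ofReal (ν ε) := by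
  obtain ⟨Cb, hCb⟩ := hbar_bdd
  obtain ⟨Smax, hSmax⟩ := hSt_bdd
  obtain ⟨c₁, -, c₂, hc₂, hreach⟩ := hreach
  obtain ⟨C, hC⟩ := P.exists_cost_sub_integral_ell_le Cb c₁ c₂ hc₂
  set K := max (C + Smax - s) 0
  refine ⟨fun ε => K / α ε, fun ε hε => div_nonneg (le_max_right _ _) (hα.pos hε).le, ?_⟩
  intro x₀ hx₀ T hT u hu ε hε
  obtain ⟨v, hv_meas, hvU, hv_close⟩ := hreach x₀ hx₀
  have hv := P.admissible_of_forall_mem_U hv_meas hvU T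
  set g := fun τ => ‖(P.traj u x₀ τ - xbar τ, u τ - ubar τ)‖
  have hu_int := hu.1.intervalIntegrable_ell hT.le x₀
  have hbar_int := href.intervalIntegrable_ell hT.le
  have hαg_int : IntegrableOn (fun τ => α (g τ)) (Icc 0 T) :=
    href.integrableOn_comp_sub hu.1 x₀ hα.continuous_comp_norm
  have hαg_le : ∫ τ in (0:ℝ)..T, α (g τ) ≤ K := by
    have hcost := hdiss x₀ hx₀ T hT.le u hu
    rw [intervalIntegral.integral_sub (hu_int.sub hbar_int)
      ((intervalIntegrable_iff_integrableOn_Icc_of_le hT.le).2 hαg_int),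
      intervalIntegral.integral_sub hu_int hbar_int] at hcost
    have hreach_cost := hC href hCb hT.le hv hv_close
    have hopt := hu.2 v hv
    unfold DHNSetting.cost at hreach_cost hopt
    linarith [hSt_lb T (P.traj u x₀ T), hSmax x₀ hx₀, le_max_left (C + Smax - s) 0]
  calc volume {τ ∈ Icc (0:ℝ) T | ε < g τ}
      ≤ volume.restrict (Icc 0 T) {τ | ε < g τ} :=
        (measure_mono fun _ hτ => And.symm hτ).trans (Measure.le_restrict_apply _ _)
    _ ≤ ENNReal.ofReal ((∫ τ in Icc 0 T, α (g τ)) / α ε) :=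
        hα.measure_lt_le_integral_div (fun τ => norm_nonneg _) hαg_int hε
    _ ≤ ENNReal.ofReal (K / α ε) := by
        rw [integral_Icc_eq_integral_Ioc, ← intervalIntegral.integral_of_le hT.le]
        gcongr
        exact (hα.pos hε).le

/-- **Proposition 2: strict dissipativity plus exponential
reachability implies the time-varying measure turnpike property.** In the DHN
optimal control setting with bounded reference pair `z̄ = (x̄, ū)`, assume
(i) strict dissipativity with storage function `St` bounded on `{0} × X₀`, and
(ii) exponential reachability of `z̄`. Then there is `ν : (0,∞) → [0,∞)` such
that for all `x₀ ∈ X₀`, all `T > 0`, all optimal pairs `z*_T` and all `ε > 0`,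
`μ(Θ_T(ε)) = μ{τ ∈ [0,T] : ‖z*_T(τ) - z̄(τ)‖ > ε} ≤ ν(ε) < ∞`. -/
theorem strict_dissipativity_implies_measure_turnpike
    {n m w : ℕ} (P : DHNSetting n m w)
    (xbar : ℝ → Fin n → ℝ) (ubar : ℝ → Fin m → ℝ)
    (href : P.IsReferencePair xbar ubar)
    (hbar_bdd : ∃ C, ∀ τ : ℝ, 0 ≤ τ → ‖(xbar τ, ubar τ)‖ ≤ C)
    -- (i) strict dissipativity with respect to `z̄`
    (α : ℝ → ℝ) (hα : IsClassK α)
    (s : ℝ) (hs : 0 ≤ s)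
    (St : ℝ → (Fin n → ℝ) → ℝ) (hSt_lb : ∀ t x, s ≤ St t x)
    (hSt_bdd : ∃ Smax, ∀ x₀ ∈ P.X₀, St 0 x₀ ≤ Smax)
    (hdiss : ∀ x₀ ∈ P.X₀, ∀ T : ℝ, 0 ≤ T → ∀ u, P.IsOptimal T x₀ u →
      St T (P.traj u x₀ T) - St 0 x₀ ≤
        ∫ τ in (0:ℝ)..T,
          (P.ell τ (P.traj u x₀ τ) (u τ) - P.ell τ (xbar τ) (ubar τ)
            - α ‖(P.traj u x₀ τ - xbar τ, u τ - ubar τ)‖))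
    -- (ii) exponential reachability of `z̄`
    (hreach : ∃ c₁ > (0:ℝ), ∃ c₂ > (0:ℝ), ∀ x₀ ∈ P.X₀,
      ∃ u : ℝ → Fin m → ℝ, Measurable u ∧ (∀ τ : ℝ, 0 ≤ τ → u τ ∈ P.U) ∧
        ∀ τ : ℝ, 0 ≤ τ →
          ‖(P.traj u x₀ τ - xbar τ, u τ - ubar τ)‖ ≤ c₁ * Real.exp (-c₂ * τ)) :
    ∃ ν : ℝ → ℝ, (∀ ε > (0:ℝ), 0 ≤ ν ε) ∧
      ∀ x₀ ∈ P.X₀, ∀ T > (0:ℝ), ∀ u, P.IsOptimal T x₀ u → ∀ ε > (0:ℝ),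
        MeasureTheory.volume
            {τ ∈ Set.Icc (0:ℝ) T |
              ε < ‖(P.traj u x₀ τ - xbar τ, u τ - ubar τ)‖} ≤
          ENNReal.ofReal (ν ε) :=
  strict_dissipativity_implies_measure_turnpike_general P xbar ubar href hbar_bdd α hα s St hSt_lb
    hSt_bdd hdiss hreach
end

section
/- Exact time-varying turnpike implies finite available storage, hence strict dissipativity (Proposition 3): In the DHN optimal control setting, let z̄ be a bounded reference pair and suppose: (i) the exact time-varying turnpike property holds at z̄, i.e., there exists ν₀ ≥ 0 such that for all x₀ ∈ X₀, all T > 0 and all optimal pairs z*_T of OCP_T(x₀): μ({τ ∈ [0,T] : z*_T(τ) ≠ z̄(τ)}) ≤ ν₀; and (ii) there exists R ≥ 0 such that ‖x*_T(τ)‖ ≤ R for all such optimal pairs, all T > 0 and all τ ∈ [0,T]. Then for every class-K function α there exists a finite constant ℓ̂ ≥ 0 such that for all x₀ ∈ X₀ the available storage satisfies S^a(x₀) ≤ ν₀ · ℓ̂ < ∞. -/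
open MeasureTheory NormedSpace
open scoped Matrix

/-!
Off the set where the optimal pair differs from `z̄` the integrand of the available storage
vanishes, because `α 0 = 0`; by the turnpike property this set has measure at most `ν₀`.
On it the integrand is bounded uniformly in `x₀`, `T` and `τ`: the optimal states lie in the
ball of radius `R`, the controls in the compact box `U`, `z̄` is bounded, and the stage cost is
a continuous function of `(x, u, r(τ), p(τ))` with `r, p` bounded. Hence
`ℓ̂ = 2 sup |ℓ| + α(2ρ)` over a large enough ball of radius `ρ` works.
-/

open MeasureTheory

lemma norm_integral_le_mul_of_ae_eq_zero_off {X E : Type*} [MeasurableSpace X] {μ : Measure X}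
    [NormedAddCommGroup E] [NormedSpace ℝ E] {f : X → E} {t : Set X} {L ν : ℝ}
    (hL : 0 ≤ L) (hν : 0 ≤ ν) (ht : μ t ≤ ENNReal.ofReal ν)
    (hle : ∀ᵐ x ∂μ, ‖f x‖ ≤ L) (hzero : ∀ᵐ x ∂μ, x ∉ t → f x = 0) :
    ‖∫ x, f x ∂μ‖ ≤ ν * L := by
  have hind : ∀ᵐ x ∂μ, ENNReal.ofReal ‖f x‖ ≤ t.indicator (fun _ => ENNReal.ofReal L) x := by
    filter_upwards [hle, hzero] with x hxL hx0
    by_cases hx : x ∈ t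
    · simpa [hx] using ENNReal.ofReal_le_ofReal hxL
    · simp [hx, hx0 hx]
  refine (norm_integral_le_lintegral_norm f).trans
    (ENNReal.toReal_le_of_le_ofReal (mul_nonneg hν hL) ?_)
  calc ∫⁻ x, ENNReal.ofReal ‖f x‖ ∂μ
      ≤ ∫⁻ x, t.indicator (fun _ => ENNReal.ofReal L) x ∂μ := lintegral_mono_ae hind
    _ ≤ ENNReal.ofReal L * μ t := lintegral_indicator_const_le _ _
    _ ≤ ENNReal.ofReal L * ENNReal.ofReal ν := by gcongr
    _ = ENNReal.ofReal (ν * L) := by rw [ENNReal.ofReal_mul hν, mul_comm]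

namespace IsClassK

variable {α : ℝ → ℝ} (hα : IsClassK α)
include hα

lemma apply_le_apply {a b : ℝ} (ha : 0 ≤ a) (hab : a ≤ b) : α a ≤ α b :=
  hα.2.1.monotoneOn ha (ha.trans hab) hab

lemma nonneg_s14 {a : ℝ} (ha : 0 ≤ a) : 0 ≤ α a :=
  hα.2.2 ▸ hα.apply_le_apply le_rfl ha

lemma abs_sub_sub_le {E : Type*} [SeminormedAddCommGroup E] {ℓ : E → ℝ} {K ρ : ℝ}
    (hK : ∀ z, ‖z‖ ≤ ρ → |ℓ z| ≤ K) {z z' : E} (hz : ‖z‖ ≤ ρ) (hz' : ‖z'‖ ≤ ρ) :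
    |ℓ z - ℓ z' - α ‖z - z'‖| ≤ 2 * K + α (2 * ρ) := by
  have hdist : ‖z - z'‖ ≤ 2 * ρ := (norm_sub_le z z').trans (by linarith)
  have hα_le := hα.apply_le_apply (norm_nonneg _) hdist
  have hα_nonneg := hα.nonneg_s14 (norm_nonneg (z - z'))
  obtain ⟨h₁, h₁'⟩ := abs_le.mp (hK z hz)
  obtain ⟨h₂, h₂'⟩ := abs_le.mp (hK z' hz')
  rw [abs_le]
  constructor <;> linarith

end IsClassK

namespace DHNSetting

variable {n m w : ℕ} (P : DHNSetting n m w)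

lemma U_eq_Icc : P.U = Set.Icc P.umin P.umax := by
  ext u
  simp [U, Pi.le_def, forall_and]

lemma exists_norm_le_of_mem_U : ∃ C, ∀ u ∈ P.U, ‖u‖ ≤ C :=
  P.U_eq_Icc ▸ (Metric.isBounded_Icc P.umin P.umax).exists_norm_le

lemma exists_abs_ell_le (ρ : ℝ) :
    ∃ K, ∀ τ, 0 ≤ τ → ∀ z : (Fin n → ℝ) × (Fin m → ℝ), ‖z‖ ≤ ρ → |P.ell τ z.1 z.2| ≤ K := by
  obtain ⟨Cr, hCr⟩ := P.r_bdd
  obtain ⟨Cp, hCp⟩ := P.p_bdd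
  let F : ((Fin n → ℝ) × (Fin m → ℝ)) × ((Fin n → ℝ) × (Fin m → ℝ)) → ℝ := fun q =>
    (1 / 2) * (q.1.1 ⬝ᵥ P.Q *ᵥ q.1.1) + (q.1.2 ⬝ᵥ P.S *ᵥ q.1.1) + (q.1.1 ⬝ᵥ q.2.1)
      + (q.1.2 ⬝ᵥ q.2.2)
  have hF : Continuous F := by fun_prop
  obtain ⟨K, hK⟩ := ((isCompact_closedBall 0 ρ).prod (isCompact_closedBall 0 (max Cr Cp))
    ).exists_bound_of_continuousOn hF.continuousOn
  refine ⟨K, fun τ hτ z hz => hK (z, P.r τ, P.p τ) ⟨?_, ?_⟩⟩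
  · simpa using hz
  · simpa using max_le_max (hCr τ hτ) (hCp τ hτ)

end DHNSetting

theorem exact_turnpike_implies_finite_available_storage_general
    {n m w : ℕ} (P : DHNSetting n m w)
    (xbar : ℝ → Fin n → ℝ) (ubar : ℝ → Fin m → ℝ)
    (hbar_bdd : ∃ C, ∀ τ : ℝ, 0 ≤ τ → ‖(xbar τ, ubar τ)‖ ≤ C)
    -- (i) exact time-varying turnpike property at `z̄`
    (ν₀ : ℝ) (hν₀ : 0 ≤ ν₀)
    (hexact : ∀ x₀ ∈ P.X₀, ∀ T > (0:ℝ), ∀ u, P.IsOptimal T x₀ u →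
      MeasureTheory.volume
          {τ ∈ Set.Icc (0:ℝ) T | (P.traj u x₀ τ, u τ) ≠ (xbar τ, ubar τ)} ≤
        ENNReal.ofReal ν₀)
    -- (ii) uniform bound on optimal state trajectories
    (R : ℝ) (hR : 0 ≤ R)
    (hbound : ∀ x₀ ∈ P.X₀, ∀ T > (0:ℝ), ∀ u, P.IsOptimal T x₀ u →
      ∀ τ ∈ Set.Icc (0:ℝ) T, ‖P.traj u x₀ τ‖ ≤ R) :
    ∀ α : ℝ → ℝ, IsClassK α →
      ∃ ℓhat : ℝ, 0 ≤ ℓhat ∧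
        ∀ x₀ ∈ P.X₀, ∀ T : ℝ, 0 ≤ T → ∀ u, P.IsOptimal T x₀ u →
          -∫ τ in (0:ℝ)..T,
              (P.ell τ (P.traj u x₀ τ) (u τ) - P.ell τ (xbar τ) (ubar τ)
                - α ‖(P.traj u x₀ τ - xbar τ, u τ - ubar τ)‖) ≤
            ν₀ * ℓhat := by
  intro α hα
  obtain ⟨Cb, hCb⟩ := hbar_bdd
  obtain ⟨CU, hCU⟩ := P.exists_norm_le_of_mem_U
  set ρ := max R (max CU Cb)
  have hρ : 0 ≤ ρ := hR.trans (le_max_left _ _)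
  obtain ⟨K, hK⟩ := P.exists_abs_ell_le ρ
  have hK₀ : 0 ≤ K := (abs_nonneg _).trans (hK 0 le_rfl 0 (by simpa using hρ))
  have hℓ : 0 ≤ 2 * K + α (2 * ρ) := by linarith [hα.nonneg_s14 (by linarith : 0 ≤ 2 * ρ)]
  refine ⟨_, hℓ, fun x₀ hx₀ T hT u hopt => ?_⟩
  rcases hT.eq_or_lt with rfl | hT₀
  · simpa using mul_nonneg hν₀ hℓ
  rw [intervalIntegral.integral_of_le hT]
  refine (neg_le_abs _).trans ?_
  rw [← Real.norm_eq_abs]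
  refine norm_integral_le_mul_of_ae_eq_zero_off hℓ hν₀
    ((Measure.restrict_apply_le _ _).trans (hexact x₀ hx₀ T hT₀ u hopt)) ?_ ?_
  · filter_upwards [ae_restrict_mem measurableSet_Ioc,
      ae_restrict_of_ae_restrict_of_subset Set.Ioc_subset_Icc_self hopt.1.2] with τ hτ huU
    have hz : ‖(P.traj u x₀ τ, u τ)‖ ≤ ρ := norm_prod_le_iff.mpr
      ⟨(hbound x₀ hx₀ T hT₀ u hopt τ (Set.Ioc_subset_Icc_self hτ)).trans (le_max_left _ _),
        (hCU _ huU).trans ((le_max_left _ _).trans (le_max_right _ _))⟩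
    have hz' : ‖(xbar τ, ubar τ)‖ ≤ ρ :=
      (hCb τ hτ.1.le).trans ((le_max_right _ _).trans (le_max_right _ _))
    simpa only [Prod.mk_sub_mk, Real.norm_eq_abs] using
      hα.abs_sub_sub_le (ℓ := fun z => P.ell τ z.1 z.2) (hK τ hτ.1.le) hz hz'
  · filter_upwards [ae_restrict_mem measurableSet_Ioc] with τ hτ hne
    obtain ⟨hx, hu⟩ := Prod.mk.inj (not_not.mp fun h => hne ⟨Set.Ioc_subset_Icc_self hτ, h⟩)
    simp [hx, hu, hα.2.2]

/-- **Proposition 3: exact time-varying turnpike implies finite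
available storage, hence strict dissipativity.** In the DHN optimal control
setting with bounded reference pair `z̄ = (x̄, ū)`, assume (i) the exact
time-varying turnpike property: `μ{τ ∈ [0,T] : z*_T(τ) ≠ z̄(τ)} ≤ ν₀` for all
`x₀ ∈ X₀`, all `T > 0` and all optimal pairs; and (ii) a uniform bound
`‖x*_T(τ)‖ ≤ R` on optimal state trajectories. Then for every class-K function
`α` there is a finite `ℓ̂ ≥ 0` such that for all `x₀ ∈ X₀` the available storage
satisfies `S^a(x₀) ≤ ν₀ ℓ̂ < ∞`, i.e. every quantity
`-∫₀^T ℓ_{z̄,α}(τ, z*_T(τ)) dτ` over which the supremum in `S^a(x₀)` is taken is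
bounded by `ν₀ ℓ̂`. -/
theorem exact_turnpike_implies_finite_available_storage
    {n m w : ℕ} (P : DHNSetting n m w)
    (xbar : ℝ → Fin n → ℝ) (ubar : ℝ → Fin m → ℝ)
    (href : P.IsReferencePair xbar ubar)
    (hbar_bdd : ∃ C, ∀ τ : ℝ, 0 ≤ τ → ‖(xbar τ, ubar τ)‖ ≤ C)
    -- (i) exact time-varying turnpike property at `z̄`
    (ν₀ : ℝ) (hν₀ : 0 ≤ ν₀)
    (hexact : ∀ x₀ ∈ P.X₀, ∀ T > (0:ℝ), ∀ u, P.IsOptimal T x₀ u →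
      MeasureTheory.volume
          {τ ∈ Set.Icc (0:ℝ) T | (P.traj u x₀ τ, u τ) ≠ (xbar τ, ubar τ)} ≤
        ENNReal.ofReal ν₀)
    -- (ii) uniform bound on optimal state trajectories
    (R : ℝ) (hR : 0 ≤ R)
    (hbound : ∀ x₀ ∈ P.X₀, ∀ T > (0:ℝ), ∀ u, P.IsOptimal T x₀ u →
      ∀ τ ∈ Set.Icc (0:ℝ) T, ‖P.traj u x₀ τ‖ ≤ R) :
    ∀ α : ℝ → ℝ, IsClassK α →
      ∃ ℓhat : ℝ, 0 ≤ ℓhat ∧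
        ∀ x₀ ∈ P.X₀, ∀ T : ℝ, 0 ≤ T → ∀ u, P.IsOptimal T x₀ u →
          -∫ τ in (0:ℝ)..T,
              (P.ell τ (P.traj u x₀ τ) (u τ) - P.ell τ (xbar τ) (ubar τ)
                - α ‖(P.traj u x₀ τ - xbar τ, u τ - ubar τ)‖) ≤
            ν₀ * ℓhat :=
  exact_turnpike_implies_finite_available_storage_general P xbar ubar hbar_bdd ν₀ hν₀ hexact R hR
    hbound
end

section
/- Bang–singular structure with unique singular arc turns a measure turnpike into an exact turnpike (core of Theorem 2): Let T > 0, let U = ∏_{i=1}^m [a_i, b_i] ⊂ ℝᵐ with a_i < b_i, and let z̄ = (x̄, ū) : [0,T] → ℝⁿ × ℝᵐ with a_i < ū_i(τ) < b_i for all τ ∈ [0,T] and all i, and suppose ε̂ := inf_{τ ∈ [0,T]} min_i min(ū_i(τ) − a_i, b_i − ū_i(τ)) > 0. Let z = (x, u) : [0,T] → ℝⁿ × ℝᵐ be measurable and assume that for almost every τ ∈ [0,T]: (a) for each component i, u_i(τ) ∈ {a_i, b_i, ū_i(τ)} (bang–singular structure from the Pontryagin maximum principle), and (b) if u(τ) =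 ū(τ) then x(τ) = x̄(τ) (uniqueness of the singular arc). Then for every ε ∈ (0, ε̂), almost every τ ∈ [0,T] with ‖z(τ) − z̄(τ)‖ ≤ ε satisfies z(τ) = z̄(τ); consequently μ({τ ∈ [0,T] : z(τ) ≠ z̄(τ)}) ≤ μ({τ ∈ [0,T] : ‖z(τ) − z̄(τ)‖ > ε}). In particular, if μ({τ ∈ [0,T] : ‖z(τ) − z̄(τ)‖ > ε}) ≤ ν(ε) for all ε > 0 and some ν : (0,∞) → [0,∞), then μ({τ ∈ [0,T] : z(τ) ≠ z̄(τ)}) ≤ ν(ε) for every ε ∈ (0, ε̂), i.e., the turnpike is exact. -/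
open MeasureTheory

/-- **core of Theorem 2: bang–singular structure with a unique
singular arc turns a measure turnpike into an exact turnpike.** Let
`U = ∏ᵢ [aᵢ, bᵢ]`, let `z̄ = (x̄, ū)` take control values in the interior of `U`
with distance to the control bounds uniformly at least `ε̂ > 0`, and let
`z = (x, u)` be measurable such that a.e. on `[0,T]`: (a) each `uᵢ(τ)` lies in
`{aᵢ, bᵢ, ūᵢ(τ)}`, and (b) `u(τ) = ū(τ)` implies `x(τ) = x̄(τ)`. Then for every
`ε ∈ (0, ε̂)`, a.e. `τ ∈ [0,T]` with `‖z(τ) - z̄(τ)‖ ≤ ε` satisfies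
`z(τ) = z̄(τ)`, hence `μ{z ≠ z̄} ≤ μ{‖z - z̄‖ > ε}`; in particular, any measure
turnpike bound `ν` yields the exact bound `μ{z ≠ z̄} ≤ ν(ε)`. -/
theorem bang_singular_measure_turnpike_is_exact
    {n m : ℕ} (T : ℝ) (hT : 0 < T)
    (a b : Fin m → ℝ) (hab : ∀ i, a i < b i)
    (zbar : ℝ → (Fin n → ℝ) × (Fin m → ℝ))
    (hbar_int : ∀ τ ∈ Set.Icc (0:ℝ) T, ∀ i, (zbar τ).2 i ∈ Set.Ioo (a i) (b i))
    (εhat : ℝ) (hεhat : 0 < εhat)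
    (hεhat_le : ∀ τ ∈ Set.Icc (0:ℝ) T, ∀ i,
      εhat ≤ min ((zbar τ).2 i - a i) (b i - (zbar τ).2 i))
    (z : ℝ → (Fin n → ℝ) × (Fin m → ℝ)) (hz_meas : Measurable z)
    (hstruct : ∀ᵐ τ ∂(volume.restrict (Set.Icc (0:ℝ) T)),
      (∀ i, (z τ).2 i = a i ∨ (z τ).2 i = b i ∨ (z τ).2 i = (zbar τ).2 i) ∧
      ((z τ).2 = (zbar τ).2 → (z τ).1 = (zbar τ).1)) :
    (∀ ε : ℝ, 0 < ε → ε < εhat →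
      (∀ᵐ τ ∂(volume.restrict (Set.Icc (0:ℝ) T)),
        ‖z τ - zbar τ‖ ≤ ε → z τ = zbar τ) ∧
      volume {τ ∈ Set.Icc (0:ℝ) T | z τ ≠ zbar τ} ≤
        volume {τ ∈ Set.Icc (0:ℝ) T | ε < ‖z τ - zbar τ‖}) ∧
    (∀ ν : ℝ → ℝ,
      (∀ ε > (0:ℝ), volume {τ ∈ Set.Icc (0:ℝ) T | ε < ‖z τ - zbar τ‖} ≤
        ENNReal.ofReal (ν ε)) →
      ∀ ε : ℝ, 0 < ε → ε < εhat →
        volume {τ ∈ Set.Icc (0:ℝ) T | z τ ≠ zbar τ} ≤ ENNReal.ofReal (ν ε)) := by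
  -- the key a.e. implication
  have key : ∀ ε : ℝ, 0 < ε → ε < εhat →
      (∀ᵐ τ ∂(volume.restrict (Set.Icc (0:ℝ) T)),
        ‖z τ - zbar τ‖ ≤ ε → z τ = zbar τ) := by
    intro ε hε hεlt
    have hIcc : ∀ᵐ τ ∂(volume.restrict (Set.Icc (0:ℝ) T)), τ ∈ Set.Icc (0:ℝ) T :=
      ae_restrict_mem measurableSet_Icc
    filter_upwards [hstruct, hIcc] with τ hτ hmem hnorm
    obtain ⟨h1, h2⟩ := hτ
    have hu : (z τ).2 = (zbar τ).2 := by
      funext i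
      have hcomp : |(z τ).2 i - (zbar τ).2 i| ≤ ε := by
        have e1 : (z τ).2 i - (zbar τ).2 i = ((z τ - zbar τ).2) i := by
          simp [Prod.snd_sub]
        have e2 : ‖((z τ - zbar τ).2) i‖ ≤ ‖(z τ - zbar τ).2‖ :=
          norm_le_pi_norm _ i
        have e3 : ‖(z τ - zbar τ).2‖ ≤ ‖z τ - zbar τ‖ := norm_snd_le _
        calc |(z τ).2 i - (zbar τ).2 i| = ‖((z τ - zbar τ).2) i‖ := by
              rw [e1]; rfl
          _ ≤ ‖z τ - zbar τ‖ := le_trans e2 e3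
          _ ≤ ε := hnorm
      have hsep := hεhat_le τ hmem i
      rcases h1 i with h | h | h
      · exfalso
        have : εhat ≤ (zbar τ).2 i - a i := le_trans hsep (min_le_left _ _)
        have habs : (zbar τ).2 i - a i ≤ |(z τ).2 i - (zbar τ).2 i| := by
          rw [h, abs_sub_comm]
          exact le_abs_self _
        linarith
      · exfalso
        have : εhat ≤ b i - (zbar τ).2 i := le_trans hsep (min_le_right _ _)
        have habs : b i - (zbar τ).2 i ≤ |(z τ).2 i - (zbar τ).2 i| := by
          rw [h]
          exact le_abs_self _
        linarith
      · exact h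
    have hx := h2 hu
    exact Prod.ext hx hu
  have meas_ineq : ∀ ε : ℝ, 0 < ε → ε < εhat →
      volume {τ ∈ Set.Icc (0:ℝ) T | z τ ≠ zbar τ} ≤
        volume {τ ∈ Set.Icc (0:ℝ) T | ε < ‖z τ - zbar τ‖} := by
    intro ε hε hεlt
    have h1 : {τ ∈ Set.Icc (0:ℝ) T | z τ ≠ zbar τ} =
        {τ | z τ ≠ zbar τ} ∩ Set.Icc (0:ℝ) T := by
      ext τ; simp [and_comm]
    have h2 : {τ ∈ Set.Icc (0:ℝ) T | ε < ‖z τ - zbar τ‖} =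
        {τ | ε < ‖z τ - zbar τ‖} ∩ Set.Icc (0:ℝ) T := by
      ext τ; simp [and_comm]
    rw [h1, h2, ← Measure.restrict_apply' measurableSet_Icc,
      ← Measure.restrict_apply' measurableSet_Icc]
    refine measure_mono_ae ?_
    filter_upwards [key ε hε hεlt] with τ hτ hne
    by_contra hle
    have : ¬ ε < ‖z τ - zbar τ‖ := hle
    exact hne (hτ (le_of_not_gt this))
  refine ⟨fun ε hε hεlt => ⟨key ε hε hεlt, meas_ineq ε hε hεlt⟩, ?_⟩
  intro ν hν ε hε hεlt
  exact le_trans (meas_ineq ε hε hεlt) (hν ε hε)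
end
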